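/- arXiv:1002.0440 — 4 statements merged into one kernel-verified Lean document; each statement's English description precedes it below -/
import Mathlib

section
/- For an element w of the hyperoctahedral group B_n, the absolute length ℓ_T(w) equals n minus the number of paired cycles of w, where T is the set of all reflections of B_n. -/
open scoped Classical

/-- Minimal length of `w` as a product of elements of `T`. -/
noncomputable def wordLen {G : Type*} [Group G] (T : Set G) (w : G) : ℕ :=
  sInf {k | ∃ l : List G, l.length = k ∧ (∀ t ∈ l, t ∈ T) ∧ l.prod = w}

/-- The absolute order: `u ⪯ v` iff `ℓ_T(u) + ℓ_T(u⁻¹v) = ℓ_T(v)`. -/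
def absLe {G : Type*} [Group G] (T : Set G) (u v : G) : Prop :=
  wordLen T u + wordLen T (u⁻¹ * v) = wordLen T v

/-- We model the set `{±1, …, ±n}` as `Fin n × Bool`; negation flips the Boolean. -/
def negp {n : ℕ} (p : Fin n × Bool) : Fin n × Bool := (p.1, !p.2)

/-- The hyperoctahedral group `B_n`: permutations `w` of `{±1,…,±n}` with
`w(-i) = -w(i)`. -/
def inB {n : ℕ} (w : Equiv.Perm (Fin n × Bool)) : Prop :=
  ∀ p, w (negp p) = negp (w p)

/-- The set of reflections of `B_n`: balanced reflections `[i]` and paired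
reflections `((i,j))`, `((i,-j))`. -/
def reflB (n : ℕ) : Set (Equiv.Perm (Fin n × Bool)) :=
  {σ | (∃ i : Fin n, σ = Equiv.swap (i, true) (i, false)) ∨
    (∃ i j : Fin n, i ≠ j ∧
      σ = Equiv.swap (i, true) (j, true) * Equiv.swap (i, false) (j, false)) ∨
    (∃ i j : Fin n, i ≠ j ∧
      σ = Equiv.swap (i, true) (j, false) * Equiv.swap (i, false) (j, true))}

/-- `O` is an orbit (cycle) of the signed permutation `w`. -/
def isOrbit {n : ℕ} (w : Equiv.Perm (Fin n × Bool)) (O : Set (Fin n × Bool)) : Prop :=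
  ∃ p, O = {q | w.SameCycle p q}

/-- A balanced cycle of `w` corresponds to an orbit which is stable under negation;
a balanced `k`-cycle is a balanced orbit of cardinality `2k`. -/
def balancedOrbit {n : ℕ} (w : Equiv.Perm (Fin n × Bool)) (O : Set (Fin n × Bool)) : Prop :=
  isOrbit w O ∧ negp '' O = O

/-- The number of paired cycles of `w ∈ B_n` (fixed points count as paired
1-cycles): non-balanced orbits come in pairs `{O, -O}`, each such pair being one
paired cycle. -/
noncomputable def pairedCycles {n : ℕ} (w : Equiv.Perm (Fin n × Bool)) : ℕ :=
  Nat.card {O : Set (Fin n × Bool) // isOrbit w O ∧ negp '' O ≠ O} / 2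

/-!
Let `B_n` act on the `n`-dimensional space of odd functions `f : {±1, …, ±n} → ℝ`
(`f (-p) = -f p`). A `w`-invariant odd function is constant on the cycles of `w` and vanishes on
the balanced ones, so it is an odd function on the set of non-balanced cycles, on which `O ↦ -O`
is a free involution: the fixed space of `w` has dimension `γ(w)`. A reflection fixes a
hyperplane, so a product of `k` reflections fixes a subspace of codimension at most `k`, whence
`ℓ_T(w) ≥ n - γ(w)`. Conversely, if `w p ≠ p`, multiplying `w` by the reflection sending `p` to
`w p` strictly enlarges the fixed space, which yields a factorisation of length `n - γ(w)`.
-/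

section Involution

variable {α : Type*}

def oddFunctions (R : Type*) [Ring R] (σ : α → α) : Submodule R (α → R) where
  carrier := {f | ∀ a, f (σ a) = -f a}
  add_mem' {f g} hf hg a := by simp [hf a, hg a, add_comm]
  zero_mem' a := by simp
  smul_mem' c f hf a := by simp [hf a]

variable {R : Type*} [Ring R] {σ : α → α}

noncomputable def oddFunctionsEquivTransversal (hσ : Function.Involutive σ) {S : Set α}
    (hS : ∀ a, σ a ∈ S ↔ a ∉ S) : oddFunctions R σ ≃ₗ[R] (S → R) where
  toFun f a := f.1 a
  map_add' _ _ := rfl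
  map_smul' _ _ := rfl
  invFun g := ⟨fun a => if h : a ∈ S then g ⟨a, h⟩ else -g ⟨σ a, (hS a).2 h⟩, fun a => by
    by_cases ha : a ∈ S
    · have hσa : σ a ∉ S := fun h => (hS a).1 h ha
      simp [ha, hσa, hσ a]
    · simp [ha, (hS a).2 ha]⟩
  left_inv f := by
    ext a
    by_cases ha : a ∈ S
    · simp [ha]
    · simp [ha, f.2 a]
  right_inv g := by
    ext ⟨a, ha⟩
    simp [ha]

lemma card_eq_two_mul_card_transversal [Finite α] (hσ : Function.Involutive σ) {S : Set α}
    (hS : ∀ a, σ a ∈ S ↔ a ∉ S) : Nat.card α = 2 * Nat.card S := by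
  have hSc : {a // a ∉ S} ≃ S :=
    { toFun a := ⟨σ a, (hS a).2 a.2⟩
      invFun a := ⟨σ a, fun h => (hS a).1 h a.2⟩
      left_inv a := Subtype.ext (hσ a)
      right_inv a := Subtype.ext (hσ a) }
  rw [← Nat.card_congr (Equiv.sumCompl (· ∈ S)), Nat.card_sum, Nat.card_congr hSc]
  ring

lemma exists_transversal (hσ : Function.Involutive σ) (hfree : ∀ a, σ a ≠ a) :
    ∃ S : Set α, ∀ a, σ a ∈ S ↔ a ∉ S := by
  obtain ⟨_, _⟩ := exists_wellFoundedLT α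
  refine ⟨{a | a < σ a}, fun a => ?_⟩
  simp only [Set.mem_ofPred_eq, hσ a, not_lt]
  exact ⟨le_of_lt, fun h => lt_of_le_of_ne h (hfree a)⟩

theorem finrank_oddFunctions [Finite α] [StrongRankCondition R] (hσ : Function.Involutive σ)
    (hfree : ∀ a, σ a ≠ a) : Module.finrank R (oddFunctions R σ) = Nat.card α / 2 := by
  obtain ⟨S, hS⟩ := exists_transversal hσ hfree
  have := Fintype.ofFinite α
  rw [(oddFunctionsEquivTransversal hσ hS).finrank_eq, Module.finrank_fintype_fun_eq_card,
    ← Nat.card_eq_fintype_card, card_eq_two_mul_card_transversal hσ hS]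
  omega

end Involution

def invariantFunctions {α : Type*} (R : Type*) [Semiring R] (w : α → α) :
    Submodule R (α → R) where
  carrier := {f | ∀ a, f (w a) = f a}
  add_mem' hf hg a := by simp [hf a, hg a]
  zero_mem' _ := rfl
  smul_mem' c f hf a := by simp [hf a]

lemma apply_eq_of_sameCycle {α β : Type*} [Finite α] {w : Equiv.Perm α} {f : α → β}
    (hf : ∀ a, f (w a) = f a) {a b : α} (h : w.SameCycle a b) : f b = f a := by
  obtain ⟨i, rfl⟩ := h.exists_nat_pow_eq
  rw [Equiv.Perm.coe_pow]
  exact congrFun (Function.iterate_invariant (funext hf) i) a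

lemma Submodule.finrank_le_finrank_inf_ker_add_one {K V : Type*} [Field K] [AddCommGroup V]
    [Module K V] [FiniteDimensional K V] (W : Submodule K V) (ψ : V →ₗ[K] K) :
    Module.finrank K W ≤ Module.finrank K ↥(W ⊓ LinearMap.ker ψ) + 1 := by
  have h1 := Submodule.finrank_sup_add_finrank_inf_eq W (LinearMap.ker ψ)
  have h2 := Submodule.finrank_le (W ⊔ LinearMap.ker ψ)
  have h3 := LinearMap.finrank_range_add_finrank_ker ψ
  have h4 : Module.finrank K (LinearMap.range ψ) ≤ 1 :=
    (Submodule.finrank_le _).trans_eq (Module.finrank_self K)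
  omega

lemma wordLen_eq {G : Type*} [Group G] {T : Set G} {w : G} {m : ℕ}
    (hex : ∃ l : List G, (∀ t ∈ l, t ∈ T) ∧ l.prod = w ∧ l.length ≤ m)
    (hmin : ∀ l : List G, (∀ t ∈ l, t ∈ T) → l.prod = w → m ≤ l.length) :
    wordLen T w = m := by
  obtain ⟨l, hlT, hlw, hlm⟩ := hex
  unfold wordLen
  have hl : l.length ∈ {k | ∃ l : List G, l.length = k ∧ (∀ t ∈ l, t ∈ T) ∧ l.prod = w} :=
    ⟨l, rfl, hlT, hlw⟩
  obtain ⟨l', hl', hl'T, hl'w⟩ := Nat.sInf_mem ⟨_, hl⟩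
  exact le_antisymm ((Nat.sInf_le hl).trans hlm) (hl' ▸ hmin l' hl'T hl'w)

namespace Hyperoctahedral

variable {n : ℕ}

@[simp] lemma negp_negp (p : Fin n × Bool) : negp (negp p) = p := by
  simp [negp]

lemma negp_involutive : Function.Involutive (negp (n := n)) := negp_negp

lemma negp_ne (p : Fin n × Bool) : negp p ≠ p := by
  simp [negp, Prod.ext_iff]

lemma eq_negp_comm {p q : Fin n × Bool} : p = negp q ↔ q = negp p :=
  ⟨fun h => by rw [h, negp_negp], fun h => by rw [h, negp_negp]⟩

lemma image_negp_image_negp (O : Set (Fin n × Bool)) : negp '' (negp '' O) = O := by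
  simp [Set.image_image]

lemma finrank_oddFunctions_negp : Module.finrank ℝ (oddFunctions ℝ (negp (n := n))) = n := by
  rw [finrank_oddFunctions negp_involutive negp_ne]
  simp

lemma inB_mul {u v : Equiv.Perm (Fin n × Bool)} (hu : inB u) (hv : inB v) : inB (u * v) :=
  fun p => by simp only [Equiv.Perm.mul_apply, hv p, hu (v p)]

def fixedOdd (w : Equiv.Perm (Fin n × Bool)) : Submodule ℝ (Fin n × Bool → ℝ) :=
  oddFunctions ℝ negp ⊓ invariantFunctions ℝ w

lemma finrank_fixedOdd_le (w : Equiv.Perm (Fin n × Bool)) :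
    Module.finrank ℝ (fixedOdd w) ≤ n :=
  (Submodule.finrank_mono (inf_le_left : fixedOdd w ≤ _)).trans_eq finrank_oddFunctions_negp

lemma fixedOdd_one : fixedOdd (1 : Equiv.Perm (Fin n × Bool)) = oddFunctions ℝ negp :=
  inf_eq_left.mpr fun _ _ _ => rfl

lemma finrank_fixedOdd_one : Module.finrank ℝ (fixedOdd (1 : Equiv.Perm (Fin n × Bool))) = n := by
  rw [fixedOdd_one, finrank_oddFunctions_negp]

section Orbits

variable {w : Equiv.Perm (Fin n × Bool)}

def orbitOf (w : Equiv.Perm (Fin n × Bool)) (p : Fin n × Bool) : Set (Fin n × Bool) :=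
  {q | w.SameCycle p q}

lemma orbitOf_apply (p : Fin n × Bool) : orbitOf w (w p) = orbitOf w p :=
  Set.ext fun _ => Equiv.Perm.sameCycle_apply_left

lemma sameCycle_negp_negp (hw : inB w) {p q : Fin n × Bool} (h : w.SameCycle p q) :
    w.SameCycle (negp p) (negp q) := by
  obtain ⟨i, rfl⟩ := h.exists_nat_pow_eq
  refine ⟨i, ?_⟩
  rw [zpow_natCast, Equiv.Perm.coe_pow]
  exact Function.Commute.iterate_left hw i p

lemma image_negp_orbitOf (hw : inB w) (p : Fin n × Bool) :
    negp '' orbitOf w p = orbitOf w (negp p) := by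
  rw [negp_involutive.image_eq_preimage_symm]
  ext q
  show w.SameCycle p (negp q) ↔ w.SameCycle (negp p) q
  exact ⟨fun h => by simpa using sameCycle_negp_negp hw h,
    fun h => by simpa using sameCycle_negp_negp hw h⟩

lemma isOrbit_image_negp (hw : inB w) {O : Set (Fin n × Bool)} (hO : isOrbit w O) :
    isOrbit w (negp '' O) := by
  obtain ⟨p, rfl⟩ := hO
  exact ⟨negp p, image_negp_orbitOf hw p⟩

lemma apply_eq_of_mem_orbit {O : Set (Fin n × Bool)} (hO : isOrbit w O) {f : Fin n × Bool → ℝ}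
    (hf : f ∈ invariantFunctions ℝ w) {p q : Fin n × Bool} (hp : p ∈ O) (hq : q ∈ O) :
    f p = f q := by
  obtain ⟨r, rfl⟩ := hO
  exact apply_eq_of_sameCycle hf (Equiv.Perm.SameCycle.trans (Equiv.Perm.SameCycle.symm hq) hp)

abbrev NonbalancedOrbit (w : Equiv.Perm (Fin n × Bool)) :=
  {O : Set (Fin n × Bool) // isOrbit w O ∧ negp '' O ≠ O}

def NonbalancedOrbit.neg (hw : inB w) (O : NonbalancedOrbit w) : NonbalancedOrbit w :=
  ⟨negp '' O.1, isOrbit_image_negp hw O.2.1, by rw [image_negp_image_negp]; exact O.2.2.symm⟩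

lemma NonbalancedOrbit.neg_involutive (hw : inB w) :
    Function.Involutive (NonbalancedOrbit.neg hw) :=
  fun O => Subtype.ext (image_negp_image_negp O.1)

lemma NonbalancedOrbit.neg_ne (hw : inB w) (O : NonbalancedOrbit w) :
    NonbalancedOrbit.neg hw O ≠ O :=
  fun h => O.2.2 (congrArg Subtype.val h)

lemma finrank_oddFunctions_nonbalancedOrbit (hw : inB w) :
    Module.finrank ℝ (oddFunctions ℝ (NonbalancedOrbit.neg hw)) = pairedCycles w :=
  finrank_oddFunctions (NonbalancedOrbit.neg_involutive hw) (NonbalancedOrbit.neg_ne hw)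

noncomputable def NonbalancedOrbit.basepoint (O : NonbalancedOrbit w) : Fin n × Bool :=
  O.2.1.choose

lemma NonbalancedOrbit.eq_orbitOf_basepoint (O : NonbalancedOrbit w) :
    O.1 = orbitOf w O.basepoint :=
  O.2.1.choose_spec

lemma mem_orbitOf_self (p : Fin n × Bool) : p ∈ orbitOf w p :=
  Equiv.Perm.SameCycle.refl _ _

lemma NonbalancedOrbit.basepoint_mem (O : NonbalancedOrbit w) : O.basepoint ∈ O.1 :=
  O.eq_orbitOf_basepoint ▸ mem_orbitOf_self _

lemma extend_image_negp (hw : inB w) {g : NonbalancedOrbit w → ℝ}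
    (hg : g ∈ oddFunctions ℝ (NonbalancedOrbit.neg hw)) (O : Set (Fin n × Bool)) :
    Function.extend Subtype.val g 0 (negp '' O) = -Function.extend Subtype.val g 0 O := by
  by_cases hO : ∃ x : NonbalancedOrbit w, x.1 = O
  · obtain ⟨x, rfl⟩ := hO
    rw [show negp '' x.1 = (NonbalancedOrbit.neg hw x).1 from rfl,
      Subtype.val_injective.extend_apply, Subtype.val_injective.extend_apply, hg x]
  · have hnegO : ¬∃ y : NonbalancedOrbit w, y.1 = negp '' O := fun ⟨y, hy⟩ =>
      hO ⟨NonbalancedOrbit.neg hw y, show negp '' y.1 = O by rw [hy, image_negp_image_negp]⟩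
    simp [Function.extend_apply' _ _ _ hO, Function.extend_apply' _ _ _ hnegO]

noncomputable def fixedOddEquiv (hw : inB w) :
    fixedOdd w ≃ₗ[ℝ] oddFunctions ℝ (NonbalancedOrbit.neg hw) where
  toFun f := ⟨fun O => f.1 O.basepoint, fun O => by
    obtain ⟨q, hq, hqO⟩ := (NonbalancedOrbit.neg hw O).basepoint_mem
    simp only
    rw [← hqO, f.2.1 q, apply_eq_of_mem_orbit O.2.1 f.2.2 hq O.basepoint_mem]⟩
  map_add' _ _ := rfl
  map_smul' _ _ := rfl
  invFun g := ⟨fun p => Function.extend Subtype.val g.1 0 (orbitOf w p),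
    fun p => by simp only; rw [← image_negp_orbitOf hw, extend_image_negp hw g.2],
    fun p => by simp only; rw [orbitOf_apply]⟩
  left_inv f := by
    ext p
    show Function.extend Subtype.val (fun O : NonbalancedOrbit w => f.1 O.basepoint) 0
      (orbitOf w p) = f.1 p
    by_cases hp : negp '' orbitOf w p = orbitOf w p
    · have hnp : negp p ∈ orbitOf w p := hp ▸ Set.mem_image_of_mem negp (mem_orbitOf_self p)
      have hfp : f.1 (negp p) = f.1 p :=
        apply_eq_of_mem_orbit ⟨p, rfl⟩ f.2.2 hnp (mem_orbitOf_self p)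
      rw [f.2.1 p] at hfp
      rw [Function.extend_apply' _ _ _ fun ⟨O, hO⟩ => O.2.2 (hO ▸ hp), Pi.zero_apply]
      linarith
    · let O : NonbalancedOrbit w := ⟨orbitOf w p, ⟨p, rfl⟩, hp⟩
      rw [show orbitOf w p = O.1 from rfl, Subtype.val_injective.extend_apply]
      exact apply_eq_of_mem_orbit O.2.1 f.2.2 O.basepoint_mem (mem_orbitOf_self p)
  right_inv g := by
    ext O
    show Function.extend Subtype.val g.1 0 (orbitOf w O.basepoint) = g.1 O
    rw [← O.eq_orbitOf_basepoint, Subtype.val_injective.extend_apply]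

theorem finrank_fixedOdd (hw : inB w) : Module.finrank ℝ (fixedOdd w) = pairedCycles w :=
  (fixedOddEquiv hw).finrank_eq.trans (finrank_oddFunctions_nonbalancedOrbit hw)

end Orbits

section Reflections

variable {p q : Fin n × Bool}

noncomputable def reflection (p q : Fin n × Bool) : Equiv.Perm (Fin n × Bool) :=
  if q = negp p then Equiv.swap p q else Equiv.swap p q * Equiv.swap (negp p) (negp q)

lemma reflection_apply (hpq : q ≠ p) (r : Fin n × Bool) :
    reflection p q r =
      if r = p then q else if r = q then p else
      if r = negp p then negp q else if r = negp q then negp p else r := by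
  unfold reflection
  have := negp_ne p
  have := negp_ne q
  split_ifs <;> simp only [Equiv.Perm.mul_apply, Equiv.swap_apply_def] <;>
    grind [negp_negp, eq_negp_comm]

lemma reflection_mul_self (hpq : q ≠ p) : reflection p q * reflection p q = 1 := by
  refine Equiv.ext fun r => ?_
  have := negp_ne p
  have := negp_ne q
  simp only [Equiv.Perm.mul_apply, reflection_apply hpq, Equiv.Perm.one_apply]
  split_ifs <;> grind [negp_negp, eq_negp_comm]

lemma inB_reflection (hpq : q ≠ p) : inB (reflection p q) := by
  intro r
  have := negp_ne p
  have := negp_ne q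
  simp only [reflection_apply hpq]
  split_ifs <;> grind [negp_negp, eq_negp_comm]

lemma reflection_mem_reflB (hpq : q ≠ p) : reflection p q ∈ reflB n := by
  obtain ⟨i, b⟩ := p
  obtain ⟨j, c⟩ := q
  by_cases hneg : (j, c) = negp (i, b)
  · simp only [negp, Prod.mk.injEq] at hneg
    obtain ⟨rfl, rfl⟩ := hneg
    refine Or.inl ⟨j, ?_⟩
    rw [reflection, if_pos (by rfl)]
    cases b
    · exact Equiv.swap_comm _ _
    · rfl
  have hij : i ≠ j := by
    rintro rfl
    cases b <;> cases c <;> simp_all [negp]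
  have hcomm : ∀ b c : Bool, Equiv.swap (i, b) (j, c) * Equiv.swap (i, !b) (j, !c) =
      Equiv.swap (i, !b) (j, !c) * Equiv.swap (i, b) (j, c) := fun b c =>
    (Equiv.Perm.disjoint_swap_swap (by simp [hij, hij.symm])).commute.eq
  rw [reflection, if_neg hneg]
  simp only [negp]
  cases b <;> cases c
  · exact Or.inr (Or.inl ⟨i, j, hij, hcomm false false⟩)
  · exact Or.inr (Or.inr ⟨i, j, hij, hcomm false true⟩)
  · exact Or.inr (Or.inr ⟨i, j, hij, rfl⟩)
  · exact Or.inr (Or.inl ⟨i, j, hij, rfl⟩)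

lemma exists_eq_reflection {t : Equiv.Perm (Fin n × Bool)} (ht : t ∈ reflB n) :
    ∃ p q, q ≠ p ∧ t = reflection p q := by
  rcases ht with ⟨i, rfl⟩ | ⟨i, j, hij, rfl⟩ | ⟨i, j, hij, rfl⟩
  · exact ⟨(i, true), (i, false), by simp, by rw [reflection, if_pos (by rfl)]⟩
  · refine ⟨(i, true), (j, true), by simp [hij.symm], ?_⟩
    rw [reflection, if_neg (by simp [negp])]
    rfl
  · refine ⟨(i, true), (j, false), by simp [hij.symm], ?_⟩
    rw [reflection, if_neg (by simp [negp, hij.symm])]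
    rfl

lemma reflection_apply_right (hpq : q ≠ p) : reflection p q q = p := by
  simp [reflection_apply hpq, hpq]

lemma reflection_apply_negp_right (hpq : q ≠ p) : reflection p q (negp q) = negp p := by
  rw [reflection_apply hpq]
  have := negp_ne q
  split_ifs <;> grind [negp_negp, eq_negp_comm]

lemma apply_reflection_apply (hpq : q ≠ p) {f : Fin n × Bool → ℝ}
    (hf : f ∈ oddFunctions ℝ negp) (hfpq : f p = f q) (r : Fin n × Bool) :
    f (reflection p q r) = f r := by
  have hodd : ∀ a, f (negp a) = -f a := hf
  rw [reflection_apply hpq]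
  split_ifs <;> subst_vars <;> simp [hodd, hfpq]

lemma le_finrank_fixedOdd_add_one {t : Equiv.Perm (Fin n × Bool)} (ht : t ∈ reflB n) :
    n ≤ Module.finrank ℝ (fixedOdd t) + 1 := by
  obtain ⟨p, q, hpq, rfl⟩ := exists_eq_reflection ht
  let ψ : (Fin n × Bool → ℝ) →ₗ[ℝ] ℝ :=
    LinearMap.proj (R := ℝ) (φ := fun _ => ℝ) p - LinearMap.proj q
  have hle : oddFunctions ℝ negp ⊓ LinearMap.ker ψ ≤ fixedOdd (reflection p q) := by
    rintro f ⟨hf, hker⟩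
    refine ⟨hf, apply_reflection_apply hpq hf ?_⟩
    simpa [ψ, sub_eq_zero] using hker
  have h1 := Submodule.finrank_le_finrank_inf_ker_add_one (oddFunctions ℝ negp) ψ
  have h2 := Submodule.finrank_mono hle
  rw [finrank_oddFunctions_negp] at h1
  omega

lemma finrank_fixedOdd_add_finrank_fixedOdd_le (s t : Equiv.Perm (Fin n × Bool)) :
    Module.finrank ℝ (fixedOdd s) + Module.finrank ℝ (fixedOdd t) ≤
      n + Module.finrank ℝ (fixedOdd (s * t)) := by
  have hinf : fixedOdd s ⊓ fixedOdd t ≤ fixedOdd (s * t) :=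
    fun f ⟨⟨hf, hs⟩, _, ht⟩ => ⟨hf, fun r => (hs (t r)).trans (ht r)⟩
  have hsup : fixedOdd s ⊔ fixedOdd t ≤ oddFunctions ℝ negp := sup_le inf_le_left inf_le_left
  have h1 := Submodule.finrank_sup_add_finrank_inf_eq (fixedOdd s) (fixedOdd t)
  have h2 := (Submodule.finrank_mono hsup).trans_eq finrank_oddFunctions_negp
  have h3 := Submodule.finrank_mono hinf
  omega

theorem le_length_add_finrank_fixedOdd {l : List (Equiv.Perm (Fin n × Bool))}
    (hl : ∀ t ∈ l, t ∈ reflB n) : n ≤ l.length + Module.finrank ℝ (fixedOdd l.prod) := by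
  induction l with
  | nil => rw [List.prod_nil, finrank_fixedOdd_one]; exact Nat.le_add_left n _
  | cons t l ih =>
    have h1 := le_finrank_fixedOdd_add_one (hl t List.mem_cons_self)
    have h2 := ih fun s hs => hl s (List.mem_cons_of_mem _ hs)
    have h3 := finrank_fixedOdd_add_finrank_fixedOdd_le t l.prod
    rw [List.prod_cons, List.length_cons]
    omega

def oddBump (q : Fin n × Bool) : Fin n × Bool → ℝ :=
  fun r => if r = q then 1 else if r = negp q then -1 else 0

lemma oddBump_mem_oddFunctions (q : Fin n × Bool) : oddBump q ∈ oddFunctions ℝ negp := by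
  intro r
  have := negp_ne q
  simp only [oddBump]
  split_ifs <;> grind [negp_negp, eq_negp_comm]

lemma oddBump_mem_invariantFunctions {σ : Equiv.Perm (Fin n × Bool)} (hq : σ q = q)
    (hnq : σ (negp q) = negp q) : oddBump q ∈ invariantFunctions ℝ σ := fun r => by
  simp only [oddBump, σ.injective.eq_iff' hq, σ.injective.eq_iff' hnq]

lemma fixedOdd_lt_fixedOdd_mul_reflection {w : Equiv.Perm (Fin n × Bool)} (hw : inB w)
    (hp : w p ≠ p) : fixedOdd w < fixedOdd (w * reflection p (w p)) := by
  refine SetLike.lt_iff_le_and_exists.mpr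
    ⟨fun f ⟨hf, hfw⟩ => ⟨hf, fun r => ?_⟩, oddBump (w p),
      ⟨oddBump_mem_oddFunctions _, oddBump_mem_invariantFunctions ?_ ?_⟩, ?_⟩
  · rw [Equiv.Perm.mul_apply, hfw]
    exact apply_reflection_apply hp hf (hfw p).symm r
  · rw [Equiv.Perm.mul_apply, reflection_apply_right hp]
  · rw [Equiv.Perm.mul_apply, reflection_apply_negp_right hp, hw p]
  · rintro ⟨-, hinv⟩
    have hbump := hinv p
    simp only [oddBump, if_neg hp.symm] at hbump
    split_ifs at hbump <;> norm_num at hbump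

theorem exists_reflB_word {w : Equiv.Perm (Fin n × Bool)} (hw : inB w) :
    ∃ l : List (Equiv.Perm (Fin n × Bool)), (∀ t ∈ l, t ∈ reflB n) ∧ l.prod = w ∧
      l.length + Module.finrank ℝ (fixedOdd w) ≤ n := by
  induction hk : n - Module.finrank ℝ (fixedOdd w) using Nat.strong_induction_on
    generalizing w with
  | _ k ih =>
    by_cases h1 : w = 1
    · subst h1
      exact ⟨[], by simp, rfl, by simp [finrank_fixedOdd_one]⟩
    obtain ⟨p, hp⟩ : ∃ p, w p ≠ p := not_forall.mp fun h => h1 (Equiv.ext h)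
    have hlt := Submodule.finrank_lt_finrank_of_lt (fixedOdd_lt_fixedOdd_mul_reflection hw hp)
    have hle := finrank_fixedOdd_le (w * reflection p (w p))
    obtain ⟨l, hl, hprod, hlen⟩ := ih _ (by omega) (inB_mul hw (inB_reflection hp)) rfl
    refine ⟨l ++ [reflection p (w p)], ?_, ?_, ?_⟩
    · simpa [or_imp, forall_and] using ⟨hl, reflection_mem_reflB hp⟩
    · rw [List.prod_append, hprod, List.prod_singleton, mul_assoc, reflection_mul_self hp,
        mul_one]
    · rw [List.length_append, List.length_singleton]
      omega

end Reflections

end Hyperoctahedral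

/-- for `w ∈ B_n`, the absolute length `ℓ_T(w)` equals `n` minus the
number of paired cycles of `w`. -/
theorem stmt_5 (n : ℕ) (w : Equiv.Perm (Fin n × Bool)) (hw : inB w) :
    wordLen (reflB n) w = n - pairedCycles w := by
  rw [← Hyperoctahedral.finrank_fixedOdd hw]
  apply wordLen_eq
  · obtain ⟨l, hl, hprod, hlen⟩ := Hyperoctahedral.exists_reflB_word hw
    exact ⟨l, hl, hprod, by omega⟩
  · rintro l hl rfl
    have := Hyperoctahedral.le_length_add_finrank_fixedOdd hl
    omega
end

section
/- In the absolute order on B_4 restricted to the subgroup D_4, the open interval (e, u) with u = [1][2][3][4] (the signed permutation sending each i to −i) has disconnected Hasse diagram; consequently the closed interval [e,u] in Abs(D_4) is not Cohen-Macaulay over any field. -/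
open scoped Classical

lemma negp_involutive {n : ℕ} : Function.Involutive (negp (n := n)) := by
  intro p; cases p; simp [negp]

/-- The signed permutation `-id = [1][2]⋯[n]`, sending every `i` to `-i`. -/
noncomputable def negPerm (n : ℕ) : Equiv.Perm (Fin n × Bool) :=
  negp_involutive.toPerm

/-- The set of reflections of `D_n`: only the paired reflections
`((i,j))`, `((i,-j))`, `1 ≤ i < j ≤ n`. -/
def reflD (n : ℕ) : Set (Equiv.Perm (Fin n × Bool)) :=
  {σ | (∃ i j : Fin n, i ≠ j ∧
      σ = Equiv.swap (i, true) (j, true) * Equiv.swap (i, false) (j, false)) ∨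
    (∃ i j : Fin n, i ≠ j ∧
      σ = Equiv.swap (i, true) (j, false) * Equiv.swap (i, false) (j, true))}

/-- Membership in `D_n`: a signed permutation with an even number of balanced
cycles. -/
def inD {n : ℕ} (w : Equiv.Perm (Fin n × Bool)) : Prop :=
  inB w ∧ Even (Nat.card {O : Set (Fin n × Bool) // balancedOrbit w O})

/-- The open interval `(e, u)` of the absolute order on `D_n`. -/
def openIntD (n : ℕ) (u : Equiv.Perm (Fin n × Bool)) : Set (Equiv.Perm (Fin n × Bool)) :=
  {z | inD z ∧ absLe (reflD n) 1 z ∧ absLe (reflD n) z u ∧ z ≠ 1 ∧ z ≠ u}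

/-- Covering relation of the poset induced on a subset `S`. -/
def covIn {G : Type*} [Group G] (T : Set G) (S : Set G) (a b : G) : Prop :=
  a ∈ S ∧ b ∈ S ∧ absLe T a b ∧ a ≠ b ∧
    ∀ c ∈ S, absLe T a c → absLe T c b → c = a ∨ c = b

/-!
Reflection length `ℓ` is bounded below by any `f` with `f e = 0` that grows by at most one under
left multiplication by a reflection. A table of lengths in `D₄` gives such an `f`, checked by
`decide` on a numeric encoding of signed permutations. On the interval `(e, u)` the bound is
exact: there `ℓ y + ℓ (u y) = ℓ u = 4` (as `ℓ (y⁻¹ u) = ℓ (u⁻¹ y)` and `u⁻¹ = u`), while the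
table satisfies `f y + f (u y) ≥ 4`. Comparability of `x` and `y` means
`ℓ (x⁻¹ y) = |ℓ y - ℓ x|`. A finite check then shows that an element of `(e, u)` comparable with
a product of `((1,2)), ((1,-2)), ((3,4)), ((3,-4))` lying in `(e, u)` is again such a product,
so no Hasse path leads from `((1,2))` to `((1,3))`.
-/

open Equiv

theorem Nat.ofDigits_div_pow_mod {b : ℕ} {L : List ℕ} (hL : ∀ d ∈ L, d < b) {i : ℕ}
    (hi : i < L.length) : Nat.ofDigits b L / b ^ i % b = L[i] := by
  have hb : 0 < b := (Nat.zero_le _).trans_lt (hL _ (List.getElem_mem hi))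
  rw [Nat.ofDigits_div_pow_eq_ofDigits_drop i hb L hL, Nat.ofDigits_mod_eq_head!,
    List.drop_eq_getElem_cons hi, List.head!_cons, Nat.mod_eq_of_lt (hL _ (List.getElem_mem hi))]

theorem Relation.ReflTransGen.mem_of_closed {α : Type*} {r : α → α → Prop} {s : Set α}
    (hs : ∀ x y, x ∈ s → r x y → y ∈ s) {a b : α} (h : ReflTransGen r a b) (ha : a ∈ s) :
    b ∈ s := by
  induction h with
  | refl => exact ha
  | tail _ hbc ih => exact hs _ _ ih hbc

namespace Equiv.Perm

variable {n : ℕ}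

/-- The number with base-`n` digits `σ 0, σ 1, …`; on such numerals the kernel evaluates
the finite checks below quickly. -/
def toCode (σ : Perm (Fin n)) : ℕ := Nat.ofDigits n (List.ofFn fun i => (σ i : ℕ))

def codeDigit (n a i : ℕ) : ℕ := a / n ^ i % n

def codeMul (n a b : ℕ) : ℕ :=
  Nat.ofDigits n (List.ofFn fun i : Fin n => codeDigit n a (codeDigit n b i))

theorem codeDigit_toCode (σ : Perm (Fin n)) (i : Fin n) : codeDigit n σ.toCode i = σ i := by
  unfold codeDigit toCode
  rw [Nat.ofDigits_div_pow_mod (by simp) (by simp), List.getElem_ofFn]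

theorem toCode_mul (σ τ : Perm (Fin n)) : (σ * τ).toCode = codeMul n σ.toCode τ.toCode := by
  simp only [codeMul, codeDigit_toCode]
  rfl

theorem toCode_injective : Function.Injective (toCode (n := n)) := fun σ τ h =>
  Equiv.ext fun i => Fin.ext <| by rw [← codeDigit_toCode, h, codeDigit_toCode]

end Equiv.Perm

section WordLength

variable {G : Type*} [Group G] {T : Set G}

theorem list_prod_mem_closure {l : List G} (hl : ∀ t ∈ l, t ∈ T) :
    l.prod ∈ Submonoid.closure T :=
  list_prod_mem fun t ht => Submonoid.subset_closure (hl t ht)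

theorem wordLen_le_length {l : List G} (hl : ∀ t ∈ l, t ∈ T) : wordLen T l.prod ≤ l.length :=
  Nat.sInf_le ⟨l, rfl, hl, rfl⟩

theorem exists_length_eq_wordLen {w : G} (hw : w ∈ Submonoid.closure T) :
    ∃ l : List G, l.length = wordLen T w ∧ (∀ t ∈ l, t ∈ T) ∧ l.prod = w := by
  obtain ⟨l, hl, rfl⟩ := Submonoid.exists_list_of_mem_closure hw
  exact Nat.sInf_mem (s := {k | ∃ l' : List G, l'.length = k ∧ (∀ t ∈ l', t ∈ T) ∧
    l'.prod = l.prod}) ⟨l.length, l, rfl, hl, rfl⟩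

theorem wordLen_eq_zero_of_notMem_closure {w : G} (hw : w ∉ Submonoid.closure T) :
    wordLen T w = 0 := by
  refine Nat.sInf_eq_zero.2 (Or.inr (Set.eq_empty_of_forall_notMem ?_))
  rintro k ⟨l, -, hl, rfl⟩
  exact hw (list_prod_mem_closure hl)

theorem wordLen_one : wordLen T 1 = 0 := by
  simpa using wordLen_le_length (T := T) (l := []) (by simp)

theorem eq_one_of_wordLen_eq_zero {w : G} (hw : w ∈ Submonoid.closure T)
    (h : wordLen T w = 0) : w = 1 := by
  obtain ⟨l, hl, -, rfl⟩ := exists_length_eq_wordLen hw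
  rw [List.length_eq_zero_iff.1 (hl.trans h), List.prod_nil]

theorem wordLen_of_mem {t : G} (ht : t ∈ T) (ht1 : t ≠ 1) : wordLen T t = 1 := by
  have hle : wordLen T [t].prod ≤ 1 := wordLen_le_length (by simpa using ht)
  have hne : wordLen T t ≠ 0 := fun h =>
    ht1 (eq_one_of_wordLen_eq_zero (Submonoid.subset_closure ht) h)
  rw [List.prod_singleton] at hle
  omega

theorem wordLen_mul_le {v w : G} (hv : v ∈ Submonoid.closure T) (hw : w ∈ Submonoid.closure T) :
    wordLen T (v * w) ≤ wordLen T v + wordLen T w := by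
  obtain ⟨l, hl, hlT, rfl⟩ := exists_length_eq_wordLen hv
  obtain ⟨m, hm, hmT, rfl⟩ := exists_length_eq_wordLen hw
  rw [← hl, ← hm, ← List.length_append, ← List.prod_append]
  exact wordLen_le_length (List.forall_mem_append.2 ⟨hlT, hmT⟩)

theorem forall_mem_reverse_map_inv {l : List G} (hT : ∀ t ∈ T, t⁻¹ ∈ T) (hl : ∀ t ∈ l, t ∈ T) :
    ∀ t ∈ (l.map (·⁻¹)).reverse, t ∈ T := by
  simp only [List.mem_reverse, List.mem_map]
  rintro _ ⟨t, ht, rfl⟩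
  exact hT t (hl t ht)

theorem wordLen_inv (hT : ∀ t ∈ T, t⁻¹ ∈ T) (w : G) : wordLen T w⁻¹ = wordLen T w := by
  have key : ∀ {w : G} {k : ℕ}, (∃ l : List G, l.length = k ∧ (∀ t ∈ l, t ∈ T) ∧ l.prod = w) →
      ∃ l : List G, l.length = k ∧ (∀ t ∈ l, t ∈ T) ∧ l.prod = w⁻¹ := by
    rintro w k ⟨l, rfl, hl, rfl⟩
    exact ⟨_, by simp, forall_mem_reverse_map_inv hT hl, (List.prod_inv_reverse l).symm⟩
  unfold wordLen
  congr 1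
  ext k
  exact ⟨fun h => by simpa using key h, key⟩

theorem inv_mem_closure (hT : ∀ t ∈ T, t⁻¹ ∈ T) {w : G} (hw : w ∈ Submonoid.closure T) :
    w⁻¹ ∈ Submonoid.closure T := by
  obtain ⟨l, hl, rfl⟩ := Submonoid.exists_list_of_mem_closure hw
  rw [List.prod_inv_reverse]
  exact list_prod_mem_closure (forall_mem_reverse_map_inv hT hl)

theorem le_wordLen_of_le_add_one {f : G → ℕ} (h1 : f 1 = 0)
    (hf : ∀ t ∈ T, ∀ w, f (t * w) ≤ f w + 1) {w : G} (hw : w ∈ Submonoid.closure T) :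
    f w ≤ wordLen T w := by
  obtain ⟨l, hlen, hl, rfl⟩ := exists_length_eq_wordLen hw
  rw [← hlen]
  clear hw hlen
  induction l with
  | nil => simp [h1]
  | cons t l ih =>
    rw [List.prod_cons, List.length_cons]
    have := hf t (hl t List.mem_cons_self) l.prod
    have := ih fun s hs => hl s (List.mem_cons_of_mem t hs)
    omega

theorem absLe_one_left (w : G) : absLe T 1 w := by
  simp [absLe, wordLen_one]

theorem absLe_prod_mul_prod {l₁ l₂ : List G} (h₁ : ∀ t ∈ l₁, t ∈ T) (h₂ : ∀ t ∈ l₂, t ∈ T)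
    (h : wordLen T (l₁.prod * l₂.prod) = l₁.length + l₂.length) :
    absLe T l₁.prod (l₁.prod * l₂.prod) := by
  have := wordLen_mul_le (list_prod_mem_closure h₁) (list_prod_mem_closure h₂)
  have := wordLen_le_length h₁
  have := wordLen_le_length h₂
  unfold absLe
  rw [inv_mul_cancel_left]
  omega

theorem wordLen_inv_mul_of_comparable (hT : ∀ t ∈ T, t⁻¹ ∈ T) {x y : G}
    (h : absLe T x y ∨ absLe T y x) :
    wordLen T (x⁻¹ * y) = Nat.dist (wordLen T x) (wordLen T y) := by
  unfold Nat.dist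
  rcases h with h | h
  · unfold absLe at h
    omega
  · rw [← wordLen_inv hT, mul_inv_rev, inv_inv]
    unfold absLe at h
    omega

/-- Not automatic, since `wordLen` is `0` off the closure of `T`. -/
theorem mem_closure_of_absLe (hT : ∀ t ∈ T, t⁻¹ ∈ T) {y u : G} (hu : u ∈ Submonoid.closure T)
    (hu0 : wordLen T u ≠ 0) (h : absLe T y u) : y ∈ Submonoid.closure T := by
  by_contra hy
  have hyu : y⁻¹ * u ∈ Submonoid.closure T := by
    by_contra hyu
    rw [absLe, wordLen_eq_zero_of_notMem_closure hy, wordLen_eq_zero_of_notMem_closure hyu] at h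
    omega
  exact hy (by simpa using mul_mem hu (inv_mem_closure hT hyu))

end WordLength

section SignedPerm

variable {n : ℕ}

def pairedRefl (i j : Fin n) : Perm (Fin n × Bool) :=
  swap (i, true) (j, true) * swap (i, false) (j, false)

def pairedReflNeg (i j : Fin n) : Perm (Fin n × Bool) :=
  swap (i, true) (j, false) * swap (i, false) (j, true)

theorem pairedRefl_mem_reflD {i j : Fin n} (h : i ≠ j) : pairedRefl i j ∈ reflD n :=
  Or.inl ⟨i, j, h, rfl⟩

theorem pairedReflNeg_mem_reflD {i j : Fin n} (h : i ≠ j) : pairedReflNeg i j ∈ reflD n :=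
  Or.inr ⟨i, j, h, rfl⟩

theorem inv_eq_self_of_mem_reflD {t : Perm (Fin n × Bool)} (ht : t ∈ reflD n) : t⁻¹ = t := by
  have key : ∀ a b c d : Fin n × Bool, [a, b, c, d].Nodup →
      (swap a b * swap c d)⁻¹ = swap a b * swap c d := fun a b c d h => by
    rw [mul_inv_rev, swap_inv, swap_inv]
    exact (Perm.disjoint_swap_swap h).commute.eq.symm
  rcases ht with ⟨i, j, h, rfl⟩ | ⟨i, j, h, rfl⟩ <;> exact key _ _ _ _ (by simp [h, h.symm])

theorem inv_mem_reflD {t : Perm (Fin n × Bool)} (ht : t ∈ reflD n) : t⁻¹ ∈ reflD n :=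
  (inv_eq_self_of_mem_reflD ht).symm ▸ ht

theorem ne_one_of_mem_reflD {t : Perm (Fin n × Bool)} (ht : t ∈ reflD n) : t ≠ 1 := by
  rcases ht with ⟨i, j, h, rfl⟩ | ⟨i, j, h, rfl⟩ <;> intro h1 <;>
    have := congrArg (· (i, true)) h1 <;> simp [swap_apply_of_ne_of_ne, h, Ne.symm h] at this

theorem negPerm_inv : (negPerm n)⁻¹ = negPerm n :=
  negp_involutive.toPerm_symm

theorem inD_of_mul_self_eq_one {σ : Perm (Fin n × Bool)} (hB : inB σ) (h2 : σ * σ = 1)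
    (hσ : ∀ p, σ p ≠ negp p) : inD σ := by
  refine ⟨hB, ?_⟩
  have : IsEmpty {O // balancedOrbit σ O} := by
    refine ⟨?_⟩
    rintro ⟨O, ⟨p, rfl⟩, hO⟩
    have hp : negp p ∈ {q | σ.SameCycle p q} :=
      hO ▸ Set.mem_image_of_mem negp (Perm.SameCycle.refl σ p)
    obtain ⟨i, hi, hpi⟩ := Perm.SameCycle.exists_pow_eq' hp
    have : orderOf σ ≤ 2 := orderOf_le_of_pow_eq_one two_pos (by rw [sq, h2])
    obtain rfl | rfl : i = 0 ∨ i = 1 := by omega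
    · obtain ⟨k, b⟩ := p
      cases b <;> simp [negp] at hpi
    · exact hσ p (by simpa using hpi)
  rw [Nat.card_of_isEmpty]
  exact Even.zero

end SignedPerm

namespace D4

abbrev P := Perm (Fin 4 × Bool)

def pointEquiv : Fin 4 × Bool ≃ Fin 8 :=
  (Equiv.prodCongr (Equiv.refl _) finTwoEquiv.symm).trans finProdFinEquiv

def code (σ : P) : ℕ := (pointEquiv.permCongr σ).toCode

theorem code_mul (σ τ : P) : code (σ * τ) = Perm.codeMul 8 (code σ) (code τ) := by
  rw [code, Equiv.permCongr_mul, Perm.toCode_mul]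
  rfl

theorem code_injective : Function.Injective code :=
  Perm.toCode_injective.comp pointEquiv.permCongr.injective

/-- Codes of the elements of `D₄` of reflection length `k ≤ 3`, as found by breadth-first
search; nothing about the table is assumed beyond what `decide` checks below. -/
def sphere : ℕ → List ℕ
  | 0 => [16434824]
  | 1 => [444087, 2279102, 5164488, 6999944, 9926280, 11789960, 16258725, 16287404, 16333128,
      16362248, 16433235, 16433690]
  | 2 => [342391, 371511, 445914, 446355, 489132, 517797, 2177406, 2206526, 2280915,
      2281370, 2324133, 2352812, 4988389, 5017068, 5161086, 5161527, 5208840, 5237064,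
      6823845, 6852524, 6996087, 6996542, 7043400, 7072520, 9705150, 9733815, 9781128,
      9809352, 9924691, 9925146, 11540151, 11568830, 11615688, 11644808, 11788371, 11788826,
      14571144, 14599368, 14599809, 16259418, 16259859, 16288083, 16288538, 16330860, 16331301,
      16359525, 16359980, 16405704, 16406145, 16434369]
  | 3 => [343525, 343980, 372204, 372645, 414967, 415422, 443646, 489811, 490266,
      518490, 518931, 2178540, 2178981, 2207205, 2207660, 2249982, 2250423, 2278647,
      2324826, 2325267, 2353491, 2353946, 4987255, 4987710, 5015934, 5016375, 5135809,
      5136264, 5164929, 5206117, 5206572, 5234796, 5235237, 6822270, 6822711, 6850935,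
      6851390, 6970824, 6971265, 6999489, 7041132, 7041573, 7069797, 7070252, 9706963,
      9707418, 9735642, 9736083, 9777271, 9777726, 9805950, 9806391, 9925825, 9954504,
      9954945, 11541978, 11542419, 11570643, 11571098, 11612286, 11612727, 11640951, 11641406,
      11760840, 11761281, 11789505, 14423269, 14423724, 14451948, 14452389, 14498113, 14498568,
      14526792, 14527233, 14569555, 14570010, 14598234, 14598675, 16258284, 16286949, 16333569,
      16361793, 16404570, 16405011]
  | _ => []

def tableCodes : List ℕ := sphere 0 ++ sphere 1 ++ sphere 2 ++ sphere 3

def tableLength (c : ℕ) : ℕ :=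
  if c ∈ sphere 0 then 0 else if c ∈ sphere 1 then 1 else if c ∈ sphere 2 then 2
  else if c ∈ sphere 3 then 3 else 4

theorem tableLength_le_four (c : ℕ) : tableLength c ≤ 4 := by
  unfold tableLength
  split_ifs <;> omega

theorem tableLength_eq_four {c : ℕ} (hc : c ∉ tableCodes) : tableLength c = 4 := by
  simp_all [tableLength, tableCodes]

theorem code_mem_sphere_one {t : P} (ht : t ∈ reflD 4) : code t ∈ sphere 1 := by
  have h : ∀ i j : Fin 4, i ≠ j →
      code (pairedRefl i j) ∈ sphere 1 ∧ code (pairedReflNeg i j) ∈ sphere 1 := by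
    decide +kernel
  rcases ht with ⟨i, j, hij, rfl⟩ | ⟨i, j, hij, rfl⟩
  exacts [(h i j hij).1, (h i j hij).2]

theorem tableLength_code_mul_le {t : P} (ht : t ∈ reflD 4) (w : P) :
    tableLength (code (t * w)) ≤ tableLength (code w) + 1 := by
  have hcheck : ∀ s ∈ sphere 1, ∀ c ∈ tableCodes,
      tableLength (Perm.codeMul 8 s c) ≤ tableLength c + 1 := by
    decide +kernel
  rw [code_mul]
  by_cases hw : code w ∈ tableCodes
  · exact hcheck _ (code_mem_sphere_one ht) _ hw
  · rw [tableLength_eq_four hw]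
    exact (tableLength_le_four _).trans (by omega)

theorem tableLength_code_one : tableLength (code 1) = 0 := by
  decide +kernel

theorem tableLength_le_wordLen {w : P} (hw : w ∈ Submonoid.closure (reflD 4)) :
    tableLength (code w) ≤ wordLen (reflD 4) w :=
  le_wordLen_of_le_add_one (f := fun w => tableLength (code w)) tableLength_code_one
    (fun _ ht w => tableLength_code_mul_le ht w) hw

theorem negPerm_eq_prod :
    negPerm 4 = [pairedRefl 0 1, pairedReflNeg 0 1, pairedRefl 2 3, pairedReflNeg 2 3].prod := by
  decide

theorem forall_mem_negPerm_word :
    ∀ t ∈ [pairedRefl 0 1, pairedReflNeg 0 1, pairedRefl 2 3, pairedReflNeg 2 3], t ∈ reflD 4 := by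
  simp [pairedRefl_mem_reflD, pairedReflNeg_mem_reflD]

theorem negPerm_mem_closure : negPerm 4 ∈ Submonoid.closure (reflD 4) :=
  negPerm_eq_prod ▸ list_prod_mem_closure forall_mem_negPerm_word

theorem wordLen_negPerm : wordLen (reflD 4) (negPerm 4) = 4 := by
  have hle : wordLen (reflD 4) (negPerm 4) ≤ 4 :=
    negPerm_eq_prod ▸ wordLen_le_length forall_mem_negPerm_word
  have hge := tableLength_le_wordLen negPerm_mem_closure
  have h4 : tableLength (code (negPerm 4)) = 4 := by decide +kernel
  omega

theorem mem_closure_of_mem_openIntD {y : P} (hy : y ∈ openIntD 4 (negPerm 4)) :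
    y ∈ Submonoid.closure (reflD 4) :=
  mem_closure_of_absLe (fun _ => inv_mem_reflD) negPerm_mem_closure
    (by rw [wordLen_negPerm]; omega) hy.2.2.1

theorem wordLen_add_wordLen_negPerm_mul {y : P} (hy : y ∈ openIntD 4 (negPerm 4)) :
    wordLen (reflD 4) y + wordLen (reflD 4) (negPerm 4 * y) = 4 := by
  have h := hy.2.2.1
  unfold absLe at h
  rwa [← wordLen_inv (fun _ => inv_mem_reflD) (y⁻¹ * negPerm 4), mul_inv_rev, inv_inv,
    negPerm_inv, wordLen_negPerm] at h

theorem wordLen_mem_Icc {y : P} (hy : y ∈ openIntD 4 (negPerm 4)) :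
    wordLen (reflD 4) y ∈ Set.Icc 1 3 := by
  have hcl := mem_closure_of_mem_openIntD hy
  have h1 : wordLen (reflD 4) y ≠ 0 := fun h => hy.2.2.2.1 (eq_one_of_wordLen_eq_zero hcl h)
  have hu : wordLen (reflD 4) (negPerm 4 * y) ≠ 0 := fun h => hy.2.2.2.2 <| by
    have := eq_one_of_wordLen_eq_zero (mul_mem negPerm_mem_closure hcl) h
    rwa [mul_eq_one_iff_inv_eq, negPerm_inv, eq_comm] at this
  have := wordLen_add_wordLen_negPerm_mul hy
  constructor <;> omega

theorem wordLen_eq_tableLength {y : P} (hy : y ∈ openIntD 4 (negPerm 4)) :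
    wordLen (reflD 4) y = tableLength (code y) ∧
      wordLen (reflD 4) (negPerm 4 * y) = tableLength (code (negPerm 4 * y)) := by
  have hcheck : ∀ c ∈ tableCodes,
      4 ≤ tableLength c + tableLength (Perm.codeMul 8 (code (negPerm 4)) c) := by
    decide +kernel
  have hcl := mem_closure_of_mem_openIntD hy
  have h1 := tableLength_le_wordLen hcl
  have h2 := tableLength_le_wordLen (mul_mem negPerm_mem_closure hcl)
  have hsum := wordLen_add_wordLen_negPerm_mul hy
  have h3 : 4 ≤ tableLength (code y) + tableLength (code (negPerm 4 * y)) := by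
    rw [code_mul]
    by_cases hc : code y ∈ tableCodes
    · exact hcheck _ hc
    · rw [tableLength_eq_four hc]
      omega
  omega

/-- The sixteen products of the commuting reflections `((1,2)), ((1,-2)), ((3,4)), ((3,-4))`;
without `e` and `u` they form the connected component of `((1,2))` in the Hasse diagram
of `(e, u)`. -/
def blockElems : List P :=
  [pairedRefl 0 1, pairedReflNeg 0 1, pairedRefl 2 3, pairedReflNeg 2 3].sublists.map List.prod

theorem mem_blockElems_of_comparable {x y : P} (hx : x ∈ blockElems)
    (hxI : x ∈ openIntD 4 (negPerm 4)) (hyI : y ∈ openIntD 4 (negPerm 4))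
    (hxy : absLe (reflD 4) x y ∨ absLe (reflD 4) y x) : y ∈ blockElems := by
  have hcheck : ∀ a ∈ blockElems.map code, 1 ≤ tableLength a → tableLength a ≤ 3 →
      ∀ c ∈ tableCodes, tableLength c + tableLength (Perm.codeMul 8 (code (negPerm 4)) c) ≤ 4 →
        tableLength (Perm.codeMul 8 a c) ≤ Nat.dist (tableLength a) (tableLength c) →
          c ∈ blockElems.map code := by
    decide +kernel
  have hinv : x⁻¹ = x := by
    have h : ∀ a ∈ blockElems.map code, Perm.codeMul 8 a a = code 1 := by decide +kernel
    exact inv_eq_of_mul_eq_one_right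
      (code_injective (by rw [code_mul]; exact h _ (List.mem_map_of_mem hx)))
  have hxℓ := (wordLen_eq_tableLength hxI).1
  obtain ⟨hyℓ, hyuℓ⟩ := wordLen_eq_tableLength hyI
  obtain ⟨hx1, hx3⟩ := wordLen_mem_Icc hxI
  have hy3 := (wordLen_mem_Icc hyI).2
  have hsum := wordLen_add_wordLen_negPerm_mul hyI
  have hdist := wordLen_inv_mul_of_comparable (fun _ => inv_mem_reflD) hxy
  rw [hinv, hxℓ, hyℓ] at hdist
  have hlow := tableLength_le_wordLen
    (mul_mem (mem_closure_of_mem_openIntD hxI) (mem_closure_of_mem_openIntD hyI))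
  rw [hdist, code_mul] at hlow
  have hc : code y ∈ tableCodes := by
    by_contra hc
    have := tableLength_eq_four hc
    omega
  obtain ⟨z, hz, hzy⟩ := List.mem_map.1 <|
    hcheck _ (List.mem_map_of_mem hx) (by omega) (by omega) _ hc (by rw [← code_mul]; omega) hlow
  exact code_injective hzy ▸ hz

theorem mem_openIntD_of_mul_prod {t : P} (ht : t ∈ reflD 4) (hD : inD t) {l : List P}
    (hl : ∀ r ∈ l, r ∈ reflD 4) (hlen : l.length = 3) (hu : t * l.prod = negPerm 4) :
    t ∈ openIntD 4 (negPerm 4) := by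
  have hℓ := wordLen_of_mem ht (ne_one_of_mem_reflD ht)
  refine ⟨hD, absLe_one_left t, ?_, ne_one_of_mem_reflD ht, fun h => ?_⟩
  · simpa [hu] using absLe_prod_mul_prod (l₁ := [t]) (by simpa using ht) hl
      (by simp [hu, wordLen_negPerm, hlen])
  · have := wordLen_negPerm
    rw [← h, hℓ] at this
    omega

theorem pairedRefl_zero_one_mem_openIntD : pairedRefl (0 : Fin 4) 1 ∈ openIntD 4 (negPerm 4) :=
  mem_openIntD_of_mul_prod (pairedRefl_mem_reflD (by decide))
    (inD_of_mul_self_eq_one (by unfold inB; decide) (by decide) (by decide))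
    (l := [pairedReflNeg 0 1, pairedRefl 2 3, pairedReflNeg 2 3])
    (by simp [pairedRefl_mem_reflD, pairedReflNeg_mem_reflD]) rfl (by decide)

theorem pairedRefl_zero_two_mem_openIntD : pairedRefl (0 : Fin 4) 2 ∈ openIntD 4 (negPerm 4) :=
  mem_openIntD_of_mul_prod (pairedRefl_mem_reflD (by decide))
    (inD_of_mul_self_eq_one (by unfold inB; decide) (by decide) (by decide))
    (l := [pairedReflNeg 0 2, pairedRefl 1 3, pairedReflNeg 1 3])
    (by simp [pairedRefl_mem_reflD, pairedReflNeg_mem_reflD]) rfl (by decide)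

theorem pairedRefl_zero_one_mem_blockElems : pairedRefl (0 : Fin 4) 1 ∈ blockElems :=
  List.mem_map.2 ⟨[pairedRefl 0 1], List.mem_sublists.2 (by simp), List.prod_singleton⟩

theorem pairedRefl_zero_two_notMem_blockElems : pairedRefl (0 : Fin 4) 2 ∉ blockElems := by
  have h : code (pairedRefl 0 2) ∉ blockElems.map code := by decide +kernel
  exact fun h' => h (List.mem_map_of_mem h')

end D4

/-- in the absolute order on `D_4`, the open interval `(e, u)` with
`u = [1][2][3][4] = -id` has a disconnected Hasse diagram: there are elements of
the open interval which cannot be joined by a path of Hasse edges within the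
open interval. (Consequently the closed interval `[e,u]` in `Abs(D_4)` is not
Cohen-Macaulay over any field.) -/
theorem stmt_7 :
    ∃ a ∈ openIntD 4 (negPerm 4), ∃ b ∈ openIntD 4 (negPerm 4),
      ¬ Relation.ReflTransGen
        (fun x y => x ∈ openIntD 4 (negPerm 4) ∧ y ∈ openIntD 4 (negPerm 4) ∧
          (covIn (reflD 4) (openIntD 4 (negPerm 4)) x y ∨
           covIn (reflD 4) (openIntD 4 (negPerm 4)) y x)) a b := by
  refine ⟨_, D4.pairedRefl_zero_one_mem_openIntD, _, D4.pairedRefl_zero_two_mem_openIntD,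
    fun h => D4.pairedRefl_zero_two_notMem_blockElems ?_⟩
  refine h.mem_of_closed (s := {x | x ∈ D4.blockElems}) ?_ D4.pairedRefl_zero_one_mem_blockElems
  rintro x y hx ⟨hxI, hyI, hcov | hcov⟩
  exacts [D4.mem_blockElems_of_comparable hx hxI hyI (.inl hcov.2.2.1),
    D4.mem_blockElems_of_comparable hx hxI hyI (.inr hcov.2.2.1)]
end

section
/- For w ∈ B_n with w = b·p where b is the product of the balanced cycles of w and p = p_1⋯p_k is the product of its disjoint paired cycles, the interval [e,w] in the absolute order on B_n is isomorphic as a poset to the direct product [e,b] × [e,p_1] × ⋯ × [e,p_k]. -/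
open scoped Classical

/-!
Identify `B_n` with the group of signed permutation matrices acting on `ℝⁿ`. By Carter's lemma the
reflection length of `w` is the codimension of its fixed space, so `u ≤ w` in the absolute order
forces `Fix w ⊆ Fix u`. For a paired cycle `p` with orbits `±O`, the vector that is `±1` on `±O` is
fixed by `w`, hence by every `u ≤ w`, so every such `u` maps the support of `p` onto itself. Thus
`u` splits into pieces supported on the supports of `b, p₁, …, pₖ`, and since these codimensions add
over disjoint supports, `u ≤ v` holds iff it holds piece by piece.
-/

open Equiv

section FixedSpace

variable {n : ℕ}

lemma negp_ne (q : Fin n × Bool) : negp q ≠ q := by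
  simp [negp, Prod.ext_iff]

lemma inB.mul {u v : Perm (Fin n × Bool)} (hu : inB u) (hv : inB v) : inB (u * v) := by
  intro q
  simp only [Perm.mul_apply, hv q, hu (v q)]

lemma inB.inv {u : Perm (Fin n × Bool)} (hu : inB u) : inB u⁻¹ := by
  intro q
  rw [Perm.inv_eq_iff_eq, hu, Perm.coe_inv, apply_symm_apply]

lemma inB.apply_eq_self_iff {w : Perm (Fin n × Bool)} (hw : inB w) (q : Fin n × Bool) :
    w q = q ↔ w (q.1, true) = (q.1, true) := by
  obtain ⟨i, _ | _⟩ := q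
  · have := hw (i, true)
    simp only [negp, Bool.not_true] at this
    rw [this]
    simp [Prod.ext_iff]
  · rfl

/-- A signed permutation acts on `ℝⁿ` by permuting the signed basis vectors `±eᵢ`; `sgnCoord q` is
the coordinate along the basis vector indexed by `q`, and `fixSpace w` below is the fixed space of
this action. -/
def sgnCoord (q : Fin n × Bool) : (Fin n → ℝ) →ₗ[ℝ] ℝ :=
  if q.2 then LinearMap.proj q.1 else -LinearMap.proj q.1

@[simp] lemma sgnCoord_apply (q : Fin n × Bool) (v : Fin n → ℝ) :
    sgnCoord q v = if q.2 then v q.1 else -v q.1 := by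
  unfold sgnCoord
  split_ifs <;> simp

lemma sgnCoord_negp (q : Fin n × Bool) (v : Fin n → ℝ) :
    sgnCoord (negp q) v = -sgnCoord q v := by
  obtain ⟨i, _ | _⟩ := q <;> simp [negp]

lemma sgnCoord_swap_apply {a c : Fin n × Bool} {v : Fin n → ℝ}
    (h : sgnCoord a v = sgnCoord c v) (q : Fin n × Bool) :
    sgnCoord (swap a c q) v = sgnCoord q v := by
  rcases eq_or_ne q a with rfl | hqa
  · rw [swap_apply_left, h]
  rcases eq_or_ne q c with rfl | hqc
  · rw [swap_apply_right, h]
  · rw [swap_apply_of_ne_of_ne hqa hqc]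

def fixSpace (w : Perm (Fin n × Bool)) : Submodule ℝ (Fin n → ℝ) :=
  ⨅ q, LinearMap.eqLocus (sgnCoord (w q)) (sgnCoord q)

lemma mem_fixSpace {w : Perm (Fin n × Bool)} {v : Fin n → ℝ} :
    v ∈ fixSpace w ↔ ∀ q, sgnCoord (w q) v = sgnCoord q v := by
  simp only [fixSpace, Submodule.mem_iInf, LinearMap.mem_eqLocus]

lemma fixSpace_one : fixSpace (1 : Perm (Fin n × Bool)) = ⊤ :=
  eq_top_iff.2 fun _ _ => mem_fixSpace.2 fun _ => rfl

lemma inf_le_fixSpace_mul (u v : Perm (Fin n × Bool)) :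
    fixSpace u ⊓ fixSpace v ≤ fixSpace (u * v) := by
  rintro x ⟨hu, hv⟩
  exact mem_fixSpace.2 fun q => by
    rw [Perm.mul_apply, mem_fixSpace.1 hu, mem_fixSpace.1 hv]

lemma sgnCoord_single_of_ne {i : Fin n} {q : Fin n × Bool} (h : q.1 ≠ i) :
    sgnCoord q (Pi.single i 1) = 0 := by
  simp [h]

lemma single_mem_fixSpace_iff {w : Perm (Fin n × Bool)} (hw : inB w) (i : Fin n) :
    Pi.single i 1 ∈ fixSpace w ↔ w (i, true) = (i, true) := by
  refine ⟨fun h => ?_, fun h => mem_fixSpace.2 fun q => ?_⟩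
  · have := mem_fixSpace.1 h (i, true)
    revert this
    generalize w (i, true) = c
    obtain ⟨j, _ | _⟩ := c <;> rcases eq_or_ne j i with rfl | hji <;> norm_num [Pi.single_apply, *]
  · rcases eq_or_ne q.1 i with hqi | hqi
    · rw [(hw.apply_eq_self_iff q).2 (hqi ▸ h)]
    · have hwq : (w q).1 ≠ i := by
        intro hwqi
        have hfix : w (w q) = w q := (hw.apply_eq_self_iff (w q)).2 (hwqi ▸ h)
        exact hqi (w.injective hfix ▸ hwqi)
      rw [sgnCoord_single_of_ne hwq, sgnCoord_single_of_ne hqi]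

end FixedSpace

section ReflectionLength

variable {n : ℕ}

noncomputable def fixCodim (w : Perm (Fin n × Bool)) : ℕ :=
  n - Module.finrank ℝ (fixSpace w)

lemma finrank_submodule_le (S : Submodule ℝ (Fin n → ℝ)) : Module.finrank ℝ S ≤ n := by
  simpa using S.finrank_le

lemma fixCodim_one : fixCodim (1 : Perm (Fin n × Bool)) = 0 := by
  rw [fixCodim, fixSpace_one, finrank_top, Module.finrank_fin_fun, Nat.sub_self]

lemma fixCodim_mul_le (u v : Perm (Fin n × Bool)) :
    fixCodim (u * v) ≤ fixCodim u + fixCodim v := by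
  have := Submodule.finrank_mono (inf_le_fixSpace_mul u v)
  have := Submodule.finrank_sup_add_finrank_inf_eq (fixSpace u) (fixSpace v)
  have := finrank_submodule_le (fixSpace u ⊔ fixSpace v)
  have := finrank_submodule_le (fixSpace (u * v))
  unfold fixCodim
  omega

lemma fixCodim_lt_of_lt {u v : Perm (Fin n × Bool)} (h : fixSpace u < fixSpace v) :
    fixCodim v < fixCodim u := by
  have := Submodule.finrank_lt_finrank_of_lt h
  have := finrank_submodule_le (fixSpace v)
  unfold fixCodim
  omega

lemma fixCodim_le_one_of_eqLocus_le {t : Perm (Fin n × Bool)} (f g : (Fin n → ℝ) →ₗ[ℝ] ℝ)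
    (h : LinearMap.eqLocus f g ≤ fixSpace t) : fixCodim t ≤ 1 := by
  rw [LinearMap.eqLocus_eq_ker_sub] at h
  have := LinearMap.finrank_range_add_finrank_ker (f - g)
  have := Submodule.finrank_mono h
  have : Module.finrank ℝ (LinearMap.range (f - g)) ≤ 1 := by
    simpa using (LinearMap.range (f - g)).finrank_le
  simp only [Module.finrank_fin_fun] at *
  unfold fixCodim
  omega

lemma reflB_inB {t : Perm (Fin n × Bool)} (ht : t ∈ reflB n) : inB t := by
  rcases ht with ⟨i, rfl⟩ | ⟨i, j, hij, rfl⟩ | ⟨i, j, hij, rfl⟩ <;> rintro ⟨m, s⟩ <;>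
  · simp only [negp, Perm.mul_apply, swap_apply_def, Prod.ext_iff]
    split_ifs <;> simp_all

lemma swap_mul_swap_mul_self {α : Type*} [DecidableEq α] {a b c d : α} (h : [a, b, c, d].Nodup) :
    swap a b * swap c d * (swap a b * swap c d) = 1 := by
  nth_rewrite 1 [(Perm.disjoint_swap_swap h).commute.eq]
  simp only [mul_assoc, swap_mul_self_mul, swap_mul_self]

lemma reflB_mul_self {t : Perm (Fin n × Bool)} (ht : t ∈ reflB n) : t * t = 1 := by
  rcases ht with ⟨i, rfl⟩ | ⟨i, j, hij, rfl⟩ | ⟨i, j, hij, rfl⟩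
  · exact swap_mul_self _ _
  all_goals exact swap_mul_swap_mul_self (by simp [hij, hij.symm])

/-- For `c = -a` the two transpositions coincide, and this is the balanced reflection `[i]`. -/
def bRefl (a c : Fin n × Bool) : Perm (Fin n × Bool) :=
  if c = negp a then swap a c else swap a c * swap (negp a) (negp c)

lemma bRefl_apply_right (a c : Fin n × Bool) : bRefl a c c = a := by
  unfold bRefl
  split_ifs with h
  · exact swap_apply_right a c
  · rw [Perm.mul_apply, swap_apply_of_ne_of_ne h (negp_ne c).symm, swap_apply_right]

lemma eqLocus_le_fixSpace_bRefl (a c : Fin n × Bool) :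
    LinearMap.eqLocus (sgnCoord a) (sgnCoord c) ≤ fixSpace (bRefl a c) := by
  intro v hv
  rw [LinearMap.mem_eqLocus] at hv
  have hneg : sgnCoord (negp a) v = sgnCoord (negp c) v := by rw [sgnCoord_negp, sgnCoord_negp, hv]
  unfold bRefl
  split_ifs
  · exact mem_fixSpace.2 (sgnCoord_swap_apply hv)
  · exact mem_fixSpace.2 fun q => by
      rw [Perm.mul_apply, sgnCoord_swap_apply hv, sgnCoord_swap_apply hneg]

lemma mem_reflB_iff {t : Perm (Fin n × Bool)} :
    t ∈ reflB n ↔ ∃ i c, c ≠ (i, true) ∧ t = bRefl (i, true) c := by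
  constructor
  · rintro (⟨i, rfl⟩ | ⟨i, j, hij, rfl⟩ | ⟨i, j, hij, rfl⟩)
    · exact ⟨i, (i, false), by simp, by simp [bRefl, negp]⟩
    · exact ⟨i, (j, true), by simp [hij.symm], by simp [bRefl, negp]⟩
    · exact ⟨i, (j, false), by simp, by simp [bRefl, negp, hij.symm]⟩
  · rintro ⟨i, ⟨j, s⟩, hne, rfl⟩
    rcases eq_or_ne j i with rfl | hji
    · cases s
      · exact Or.inl ⟨j, by simp [bRefl, negp]⟩
      · exact absurd rfl hne
    · cases s
      · exact Or.inr (Or.inr ⟨i, j, hji.symm, by simp [bRefl, negp, hji]⟩)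
      · exact Or.inr (Or.inl ⟨i, j, hji.symm, by simp [bRefl, negp]⟩)

lemma fixCodim_le_one_of_mem_reflB {t : Perm (Fin n × Bool)} (ht : t ∈ reflB n) :
    fixCodim t ≤ 1 := by
  obtain ⟨i, c, -, rfl⟩ := mem_reflB_iff.1 ht
  exact fixCodim_le_one_of_eqLocus_le _ _ (eqLocus_le_fixSpace_bRefl _ _)

lemma exists_reflB_fixSpace_lt {w : Perm (Fin n × Bool)} (hw : inB w) (h1 : w ≠ 1) :
    ∃ t ∈ reflB n, fixSpace w < fixSpace (t * w) := by
  obtain ⟨i, hi⟩ : ∃ i, w (i, true) ≠ (i, true) := by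
    by_contra! h
    exact h1 (Equiv.ext fun q => (hw.apply_eq_self_iff q).2 (h q.1))
  have ht : bRefl (i, true) (w (i, true)) ∈ reflB n := mem_reflB_iff.2 ⟨i, _, hi, rfl⟩
  have hle : fixSpace w ≤ fixSpace (bRefl (i, true) (w (i, true))) := fun v hv =>
    eqLocus_le_fixSpace_bRefl _ _ (LinearMap.mem_eqLocus.2 (mem_fixSpace.1 hv (i, true)).symm)
  refine ⟨_, ht, lt_of_le_of_ne ((le_inf hle le_rfl).trans (inf_le_fixSpace_mul _ w)) ?_⟩
  -- Carter's argument: `t` fixes `Fix w`, and `tw` fixes in addition `eᵢ`, which `w` moves.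
  intro heq
  refine hi ((single_mem_fixSpace_iff hw i).1 (heq ▸ ?_))
  exact (single_mem_fixSpace_iff ((reflB_inB ht).mul hw) i).2 (bRefl_apply_right _ _)

lemma exists_reflB_word {w : Perm (Fin n × Bool)} (hw : inB w) :
    ∃ l : List (Perm (Fin n × Bool)), (∀ t ∈ l, t ∈ reflB n) ∧ l.prod = w ∧
      l.length ≤ fixCodim w := by
  induction hd : fixCodim w using Nat.strong_induction_on generalizing w with
  | _ d ih =>
    by_cases h1 : w = 1
    · exact ⟨[], by simp, h1.symm ▸ rfl, by simp⟩
    obtain ⟨t, ht, hlt⟩ := exists_reflB_fixSpace_lt hw h1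
    obtain ⟨l, hl, hprod, hlen⟩ :=
      ih _ (hd ▸ fixCodim_lt_of_lt hlt) ((reflB_inB ht).mul hw) rfl
    refine ⟨t :: l, ?_, ?_, ?_⟩
    · simpa [ht] using hl
    · rw [List.prod_cons, hprod, ← mul_assoc, reflB_mul_self ht, one_mul]
    · have := fixCodim_lt_of_lt hlt
      simp only [List.length_cons]
      omega

lemma fixCodim_prod_le {l : List (Perm (Fin n × Bool))} (hl : ∀ t ∈ l, t ∈ reflB n) :
    fixCodim l.prod ≤ l.length := by
  induction l with
  | nil => simp [fixCodim_one]
  | cons t l ih =>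
    rw [List.forall_mem_cons] at hl
    have := fixCodim_mul_le t l.prod
    have := fixCodim_le_one_of_mem_reflB hl.1
    have := ih hl.2
    simp only [List.prod_cons, List.length_cons]
    omega

theorem wordLen_reflB {w : Perm (Fin n × Bool)} (hw : inB w) :
    wordLen (reflB n) w = fixCodim w := by
  obtain ⟨l, hl, hprod, hlen⟩ := exists_reflB_word hw
  have hmem : l.length ∈ {k | ∃ l : List (Perm (Fin n × Bool)),
      l.length = k ∧ (∀ t ∈ l, t ∈ reflB n) ∧ l.prod = w} := ⟨l, rfl, hl, hprod⟩
  refine le_antisymm ((Nat.sInf_le hmem).trans hlen) (le_csInf ⟨_, hmem⟩ ?_)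
  rintro _ ⟨l', rfl, hl', rfl⟩
  exact fixCodim_prod_le hl'

lemma absLe_iff_fixCodim {u v : Perm (Fin n × Bool)} (hu : inB u) (hv : inB v) :
    absLe (reflB n) u v ↔ fixCodim u + fixCodim (u⁻¹ * v) = fixCodim v := by
  rw [absLe, wordLen_reflB hu, wordLen_reflB (hu.inv.mul hv), wordLen_reflB hv]

lemma fixSpace_le_of_absLe {u v : Perm (Fin n × Bool)} (hu : inB u) (hv : inB v)
    (h : absLe (reflB n) u v) : fixSpace v ≤ fixSpace u := by
  rw [absLe_iff_fixCodim hu hv] at h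
  have hle : fixSpace u ⊓ fixSpace (u⁻¹ * v) ≤ fixSpace v := by
    simpa using inf_le_fixSpace_mul u (u⁻¹ * v)
  have := Submodule.finrank_sup_add_finrank_inf_eq (fixSpace u) (fixSpace (u⁻¹ * v))
  have := finrank_submodule_le (fixSpace u ⊔ fixSpace (u⁻¹ * v))
  have := finrank_submodule_le (fixSpace u)
  have := finrank_submodule_le (fixSpace (u⁻¹ * v))
  have := finrank_submodule_le (fixSpace v)
  unfold fixCodim at h
  rw [← Submodule.eq_of_le_of_finrank_le hle (by omega)]
  exact inf_le_left

end ReflectionLength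

section Support

variable {n : ℕ}

def SuppIn (w : Perm (Fin n × Bool)) (A : Set (Fin n)) : Prop :=
  ∀ q : Fin n × Bool, q.1 ∉ A → w q = q

namespace SuppIn

variable {u v w : Perm (Fin n × Bool)} {A B : Set (Fin n)}

lemma mono (hw : SuppIn w A) (h : A ⊆ B) : SuppIn w B :=
  fun q hq => hw q fun hA => hq (h hA)

lemma mul (hu : SuppIn u A) (hv : SuppIn v A) : SuppIn (u * v) A :=
  fun q hq => by rw [Perm.mul_apply, hv q hq, hu q hq]

lemma inv (hw : SuppIn w A) : SuppIn w⁻¹ A :=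
  fun q hq => by rw [Perm.inv_eq_iff_eq, hw q hq]

lemma apply_mem_iff (hw : SuppIn w A) (q : Fin n × Bool) : (w q).1 ∈ A ↔ q.1 ∈ A := by
  refine not_iff_not.1 ⟨fun h => ?_, fun h => by rwa [hw q h]⟩
  rwa [← w.injective (hw _ h)]

lemma commute (hu : SuppIn u Aᶜ) (hv : SuppIn v A) : Commute u v :=
  Perm.Disjoint.commute fun q => by
    by_cases hq : q.1 ∈ A
    · exact Or.inl (hu q (not_not_intro hq))
    · exact Or.inr (hv q hq)

lemma of_absLe (hu : inB u) (hw : inB w) (h : absLe (reflB n) u w) (hwA : SuppIn w A) :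
    SuppIn u A := fun q hq =>
  (hu.apply_eq_self_iff q).2 <| (single_mem_fixSpace_iff hu q.1).1 <|
    fixSpace_le_of_absLe hu hw h ((single_mem_fixSpace_iff hw q.1).2 (hwA _ hq))

end SuppIn

variable {x y : Perm (Fin n × Bool)} {A : Set (Fin n)}

lemma mem_fixSpace_of_suppIn {v : Fin n → ℝ} (hw : SuppIn x A) (hv : ∀ i ∈ A, v i = 0) :
    v ∈ fixSpace x := mem_fixSpace.2 fun q => by
  by_cases hq : q.1 ∈ A
  · simp [hv _ hq, hv _ ((hw.apply_mem_iff q).2 hq)]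
  · rw [hw q hq]

lemma fixSpace_mul_le_right (hx : SuppIn x Aᶜ) (hy : SuppIn y A) :
    fixSpace (x * y) ≤ fixSpace y := fun v hv => mem_fixSpace.2 fun q => by
  by_cases hq : q.1 ∈ A
  · have hxy := mem_fixSpace.1 hv q
    rwa [Perm.mul_apply, hx (y q) (not_not_intro ((hy.apply_mem_iff q).2 hq))] at hxy
  · rw [hy q hq]

lemma fixSpace_mul_of_suppIn (hx : SuppIn x Aᶜ) (hy : SuppIn y A) :
    fixSpace (x * y) = fixSpace x ⊓ fixSpace y := by
  refine le_antisymm (le_inf ?_ (fixSpace_mul_le_right hx hy)) (inf_le_fixSpace_mul x y)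
  rw [(hx.commute hy).eq]
  exact fixSpace_mul_le_right (hy.mono (compl_compl A).ge) hx

lemma fixSpace_sup_of_suppIn (hx : SuppIn x Aᶜ) (hy : SuppIn y A) :
    fixSpace x ⊔ fixSpace y = ⊤ := by
  refine eq_top_iff.2 fun v _ => ?_
  rw [← Set.indicator_self_add_compl A v]
  refine Submodule.add_mem_sup (mem_fixSpace_of_suppIn hx fun i hi => ?_)
    (mem_fixSpace_of_suppIn hy fun i hi => ?_)
  · exact Set.indicator_of_notMem hi v
  · exact Set.indicator_of_notMem (not_not_intro hi) v

lemma fixCodim_mul_of_suppIn (hx : SuppIn x Aᶜ) (hy : SuppIn y A) :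
    fixCodim (x * y) = fixCodim x + fixCodim y := by
  have := Submodule.finrank_sup_add_finrank_inf_eq (fixSpace x) (fixSpace y)
  rw [fixSpace_sup_of_suppIn hx hy, ← fixSpace_mul_of_suppIn hx hy, finrank_top,
    Module.finrank_fin_fun] at this
  have := finrank_submodule_le (fixSpace x)
  have := finrank_submodule_le (fixSpace y)
  unfold fixCodim
  omega

lemma absLe_mul_mul_iff {x₁ x₂ y₁ y₂ : Perm (Fin n × Bool)}
    (hx₁ : inB x₁) (hx₂ : inB x₂) (hy₁ : inB y₁) (hy₂ : inB y₂)
    (hx₁A : SuppIn x₁ Aᶜ) (hx₂A : SuppIn x₂ Aᶜ) (hy₁A : SuppIn y₁ A) (hy₂A : SuppIn y₂ A) :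
    absLe (reflB n) (x₁ * y₁) (x₂ * y₂) ↔ absLe (reflB n) x₁ x₂ ∧ absLe (reflB n) y₁ y₂ := by
  have hquot : (x₁ * y₁)⁻¹ * (x₂ * y₂) = x₁⁻¹ * x₂ * (y₁⁻¹ * y₂) := by
    rw [mul_inv_rev, mul_assoc, ← mul_assoc x₁⁻¹, ← mul_assoc y₁⁻¹,
      ← ((hx₁A.inv.mul hx₂A).commute hy₁A.inv).eq, mul_assoc]
  have hx := fixCodim_mul_le x₁ (x₁⁻¹ * x₂)
  have hy := fixCodim_mul_le y₁ (y₁⁻¹ * y₂)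
  rw [mul_inv_cancel_left] at hx hy
  rw [absLe_iff_fixCodim (hx₁.mul hy₁) (hx₂.mul hy₂), absLe_iff_fixCodim hx₁ hx₂,
    absLe_iff_fixCodim hy₁ hy₂, hquot, fixCodim_mul_of_suppIn hx₁A hy₁A,
    fixCodim_mul_of_suppIn hx₂A hy₂A,
    fixCodim_mul_of_suppIn (hx₁A.inv.mul hx₂A) (hy₁A.inv.mul hy₂A)]
  omega

end Support

section Split

variable {n : ℕ}

abbrev absInterval (w : Perm (Fin n × Bool)) : Type :=
  {z : Perm (Fin n × Bool) // inB z ∧ absLe (reflB n) z w}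

def AbsStable (w : Perm (Fin n × Bool)) (A : Set (Fin n)) : Prop :=
  ∀ u, inB u → absLe (reflB n) u w → ∀ q : Fin n × Bool, (u q).1 ∈ A ↔ q.1 ∈ A

lemma sgnCoord_ne_zero_iff (q : Fin n × Bool) (v : Fin n → ℝ) : sgnCoord q v ≠ 0 ↔ v q.1 ≠ 0 := by
  obtain ⟨i, _ | _⟩ := q <;> simp

lemma absStable_support {w : Perm (Fin n × Bool)} {v : Fin n → ℝ} (hw : inB w)
    (hv : v ∈ fixSpace w) : AbsStable w (Function.support v) := fun u hu h q => by
  simp only [Function.mem_support, ← sgnCoord_ne_zero_iff,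
    mem_fixSpace.1 (fixSpace_le_of_absLe hu hw h hv) q]

variable {u x y : Perm (Fin n × Bool)} {A : Set (Fin n)}

noncomputable def restrictBlock (u : Perm (Fin n × Bool)) (A : Set (Fin n))
    (h : ∀ q : Fin n × Bool, (u q).1 ∈ A ↔ q.1 ∈ A) : Perm (Fin n × Bool) :=
  Perm.ofSubtype (u.subtypePerm (p := fun q => q.1 ∈ A) h)

lemma restrictBlock_apply {h : ∀ q : Fin n × Bool, (u q).1 ∈ A ↔ q.1 ∈ A} {q : Fin n × Bool}
    (hq : q.1 ∈ A) : restrictBlock u A h q = u q :=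
  Perm.ofSubtype_apply_of_mem (p := fun q : Fin n × Bool => q.1 ∈ A) _ hq

lemma restrictBlock_suppIn {h : ∀ q : Fin n × Bool, (u q).1 ∈ A ↔ q.1 ∈ A} :
    SuppIn (restrictBlock u A h) A :=
  fun _ hq => Perm.ofSubtype_apply_of_not_mem _ hq

lemma restrictBlock_inB (hu : inB u) {h : ∀ q : Fin n × Bool, (u q).1 ∈ A ↔ q.1 ∈ A} :
    inB (restrictBlock u A h) := fun q => by
  by_cases hq : q.1 ∈ A
  · rw [restrictBlock_apply hq, restrictBlock_apply (q := negp q) hq, hu]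
  · rw [restrictBlock_suppIn q hq, restrictBlock_suppIn (negp q) hq]

lemma restrictBlock_mul (hxA : SuppIn x Aᶜ) (hyA : SuppIn y A)
    {h : ∀ q : Fin n × Bool, ((x * y) q).1 ∈ A ↔ q.1 ∈ A} : restrictBlock (x * y) A h = y := by
  ext q : 1
  by_cases hq : q.1 ∈ A
  · rw [restrictBlock_apply hq, Perm.mul_apply,
      hxA (y q) (not_not_intro ((hyA.apply_mem_iff q).2 hq))]
  · rw [restrictBlock_suppIn q hq, hyA q hq]

lemma mul_inv_restrictBlock_suppIn {h : ∀ q : Fin n × Bool, (u q).1 ∈ A ↔ q.1 ∈ A} :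
    SuppIn (u * (restrictBlock u A h)⁻¹) Aᶜ := fun q hq => by
  have hr : ((restrictBlock u A h)⁻¹ q).1 ∈ A :=
    (restrictBlock_suppIn.inv.apply_mem_iff q).2 (not_not.1 hq)
  rw [Perm.mul_apply, ← restrictBlock_apply (h := h) hr, Perm.coe_inv, apply_symm_apply]

theorem exists_absInterval_equiv_prod (hx : inB x) (hy : inB y) (hxA : SuppIn x Aᶜ)
    (hyA : SuppIn y A) (hA : AbsStable (x * y) A) :
    ∃ f : absInterval (x * y) ≃ absInterval x × absInterval y, ∀ u v,
      absLe (reflB n) u.1 v.1 ↔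
        absLe (reflB n) (f u).1.1 (f v).1.1 ∧ absLe (reflB n) (f u).2.1 (f v).2.1 := by
  let uy (u : absInterval (x * y)) := restrictBlock u.1 A (hA u.1 u.2.1 u.2.2)
  let ux (u : absInterval (x * y)) := u.1 * (uy u)⁻¹
  have hsplit (u : absInterval (x * y)) : ux u * uy u = u.1 := inv_mul_cancel_right _ _
  have hux (u : absInterval (x * y)) : inB (ux u) := u.2.1.mul (restrictBlock_inB u.2.1).inv
  have huy (u : absInterval (x * y)) : inB (uy u) := restrictBlock_inB u.2.1
  have hle (u : absInterval (x * y)) : absLe (reflB n) (ux u) x ∧ absLe (reflB n) (uy u) y :=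
    (absLe_mul_mul_iff (hux u) hx (huy u) hy mul_inv_restrictBlock_suppIn hxA
      restrictBlock_suppIn hyA).1 (by rw [hsplit]; exact u.2.2)
  have hxA' (a : absInterval x) : SuppIn a.1 Aᶜ := .of_absLe a.2.1 hx a.2.2 hxA
  have hyA' (b : absInterval y) : SuppIn b.1 A := .of_absLe b.2.1 hy b.2.2 hyA
  let g (ab : absInterval x × absInterval y) : absInterval (x * y) :=
    ⟨ab.1.1 * ab.2.1, ab.1.2.1.mul ab.2.2.1,
      (absLe_mul_mul_iff ab.1.2.1 hx ab.2.2.1 hy (hxA' ab.1) hxA (hyA' ab.2) hyA).2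
        ⟨ab.1.2.2, ab.2.2.2⟩⟩
  refine ⟨⟨fun u => (⟨ux u, hux u, (hle u).1⟩, ⟨uy u, huy u, (hle u).2⟩), g,
    fun u => Subtype.ext (hsplit u), fun ab => ?_⟩, fun u v => ?_⟩
  · have hb : uy (g ab) = ab.2.1 := restrictBlock_mul (hxA' ab.1) (hyA' ab.2)
    refine Prod.ext (Subtype.ext ?_) (Subtype.ext hb)
    simp only [ux, hb]
    exact mul_inv_cancel_right _ _
  · conv_lhs => rw [← hsplit u, ← hsplit v]
    exact absLe_mul_mul_iff (hux u) (hux v) (huy u) (huy v) mul_inv_restrictBlock_suppIn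
      mul_inv_restrictBlock_suppIn restrictBlock_suppIn restrictBlock_suppIn

end Split

section PairedCycle

variable {n : ℕ} {p : Perm (Fin n × Bool)} {O : Set (Fin n × Bool)}

lemma mem_negp_image {q : Fin n × Bool} : q ∈ negp '' O ↔ negp q ∈ O := by
  refine ⟨?_, fun h => ⟨negp q, h, by simp [negp]⟩⟩
  rintro ⟨r, hr, rfl⟩
  simpa [negp] using hr

def movedIdx (w : Perm (Fin n × Bool)) : Set (Fin n) := {i | w (i, true) ≠ (i, true)}

lemma suppIn_movedIdx (hp : inB p) : SuppIn p (movedIdx p) :=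
  fun q hq => (hp.apply_eq_self_iff q).2 (not_not.1 hq)

noncomputable def signVec (O : Set (Fin n × Bool)) : Fin n → ℝ :=
  fun i => (if (i, true) ∈ O then 1 else 0) - if (i, false) ∈ O then 1 else 0

lemma sgnCoord_signVec (q : Fin n × Bool) :
    sgnCoord q (signVec O) = (if q ∈ O then 1 else 0) - if negp q ∈ O then 1 else 0 := by
  obtain ⟨i, _ | _⟩ := q <;> simp [signVec, negp]

lemma signVec_mem_fixSpace (hp : inB p) (hO : ∀ q, p q ∈ O ↔ q ∈ O) :
    signVec O ∈ fixSpace p :=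
  mem_fixSpace.2 fun q => by rw [sgnCoord_signVec, sgnCoord_signVec, ← hp, hO, hO]

lemma support_signVec (hO : negp '' O ∩ O = ∅) :
    Function.support (signVec O) = {i | (i, true) ∈ O ∨ (i, false) ∈ O} := by
  ext i
  have hboth : ¬((i, true) ∈ O ∧ (i, false) ∈ O) := fun h =>
    (Set.eq_empty_iff_forall_notMem.1 hO) (i, false) ⟨⟨_, h.1, rfl⟩, h.2⟩
  simp only [Function.mem_support, signVec]
  change _ ↔ _ ∨ _
  split_ifs <;> simp_all

lemma apply_ne_self_of_isOrbit (hO : isOrbit p O) (hcard : 2 ≤ Nat.card O) {q : Fin n × Bool}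
    (hq : q ∈ O) : p q ≠ q := by
  obtain ⟨x, rfl⟩ := hO
  intro hfix
  have hsub : ({r | p.SameCycle x r} : Set _).Subsingleton := fun r hr s hs =>
    ((hq.symm.trans hr).eq_of_left hfix).symm.trans ((hq.symm.trans hs).eq_of_left hfix)
  have := Finite.card_le_one_iff_subsingleton.2 ((Set.subsingleton_coe _).2 hsub)
  omega

lemma movedIdx_eq_of_isOrbit (hp : inB p) (hO : isOrbit p O) (hcard : 2 ≤ Nat.card O)
    (hfix : ∀ q, q ∉ O → q ∉ negp '' O → p q = q) :
    movedIdx p = {i | (i, true) ∈ O ∨ (i, false) ∈ O} := by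
  ext i
  refine ⟨fun hi => ?_, ?_⟩
  · change (i, true) ∈ O ∨ (i, false) ∈ O
    by_contra! h
    exact hi (hfix _ h.1 (mem_negp_image.not.2 h.2))
  · rintro (h | h)
    · exact apply_ne_self_of_isOrbit hO hcard h
    · exact fun hi => apply_ne_self_of_isOrbit hO hcard h ((hp.apply_eq_self_iff _).2 hi)

lemma exists_mem_fixSpace_support_eq (hp : inB p) (hO : isOrbit p O) (hcard : 2 ≤ Nat.card O)
    (hdisj : negp '' O ∩ O = ∅) (hfix : ∀ q, q ∉ O → q ∉ negp '' O → p q = q) :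
    ∃ v ∈ fixSpace p, Function.support v = movedIdx p := by
  refine ⟨signVec O, signVec_mem_fixSpace hp fun q => ?_, ?_⟩
  · obtain ⟨x, rfl⟩ := hO
    exact Perm.sameCycle_apply_right
  · rw [support_signVec hdisj, movedIdx_eq_of_isOrbit hp hO hcard hfix]

lemma absStable_mul_movedIdx {b : Perm (Fin n × Bool)} (hb : inB b) (hp : inB p)
    (hbp : SuppIn b (movedIdx p)ᶜ) (hfix : ∃ v ∈ fixSpace p, Function.support v = movedIdx p) :
    AbsStable (b * p) (movedIdx p) := by
  obtain ⟨v, hv, hsupp⟩ := hfix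
  have hv' : v ∈ fixSpace (b * p) := by
    refine (fixSpace_mul_of_suppIn hbp (suppIn_movedIdx hp)).ge
      ⟨mem_fixSpace_of_suppIn hbp fun i hi => ?_, hv⟩
    rwa [← Function.notMem_support, hsupp]
  exact hsupp ▸ absStable_support (hb.mul hp) hv'

end PairedCycle

theorem exists_absInterval_equiv_pi {n k : ℕ} {w b : Perm (Fin n × Bool)}
    {p : Fin k → Perm (Fin n × Bool)} (hb : inB b) (hp : ∀ i, inB (p i))
    (hfix : ∀ i, ∃ v ∈ fixSpace (p i), Function.support v = movedIdx (p i))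
    (hdisj : Pairwise fun i j => Disjoint (movedIdx (p i)) (movedIdx (p j)))
    (hbp : SuppIn b (⋃ i, movedIdx (p i))ᶜ) (hw : w = b * (List.ofFn p).prod) :
    ∃ f : absInterval w ≃ absInterval b × ∀ i, absInterval (p i), ∀ x y,
      absLe (reflB n) x.1 y.1 ↔ absLe (reflB n) (f x).1.1 (f y).1.1 ∧
        ∀ i, absLe (reflB n) ((f x).2 i).1 ((f y).2 i).1 := by
  induction k generalizing w b with
  | zero =>
    simp only [List.ofFn_zero, List.prod_nil, mul_one] at hw
    subst hw
    exact ⟨(Equiv.prodUnique _ _).symm, fun x y => by simp⟩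
  | succ k ih =>
    have hp0 : SuppIn (p 0) (movedIdx (p 0)) := suppIn_movedIdx (hp 0)
    have hb0 : SuppIn b (movedIdx (p 0))ᶜ :=
      hbp.mono (Set.compl_subset_compl.2 (Set.subset_iUnion (fun i => movedIdx (p i)) 0))
    obtain ⟨f₁, hf₁⟩ := exists_absInterval_equiv_prod hb (hp 0) hb0 hp0
      (absStable_mul_movedIdx hb (hp 0) hb0 (hfix 0))
    have hbp' : SuppIn (b * p 0) (⋃ i : Fin k, movedIdx (p i.succ))ᶜ := by
      refine (hbp.mono (Set.compl_subset_compl.2 ?_)).mul (hp0.mono ?_)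
      · exact Set.iUnion_subset fun i : Fin k => Set.subset_iUnion (fun i => movedIdx (p i)) i.succ
      · exact Disjoint.subset_compl_right <|
          Set.disjoint_iUnion_right.2 fun i => hdisj (Fin.succ_ne_zero i).symm
    obtain ⟨f₂, hf₂⟩ := ih (w := w) (hb.mul (hp 0)) (fun i => hp _) (fun i => hfix _)
      (fun i j hij => hdisj ((Fin.succ_injective _).ne hij)) hbp'
      (by rw [hw, List.ofFn_succ, List.prod_cons, mul_assoc])
    refine ⟨f₂.trans ((f₁.prodCongr (Equiv.refl _)).trans ((Equiv.prodAssoc _ _ _).trans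
      ((Equiv.refl _).prodCongr (Fin.consEquiv fun i => absInterval (p i))))), fun x y => ?_⟩
    rw [hf₂, hf₁, Fin.forall_fin_succ]
    simp [and_assoc]

theorem stmt_18_general (n k : ℕ) (w b : Equiv.Perm (Fin n × Bool))
    (p : Fin k → Equiv.Perm (Fin n × Bool))
    (hb : inB b) (hp : ∀ i, inB (p i))
    (hpc : ∀ i, ∃ O : Set (Fin n × Bool), isOrbit (p i) O ∧ 2 ≤ Nat.card O ∧
      (negp '' O) ∩ O = ∅ ∧ ∀ q, q ∉ O → q ∉ negp '' O → (p i) q = q)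
    (hdisj₁ : ∀ i, ∀ q, b q ≠ q → (p i) q = q)
    (hdisj₂ : ∀ i j, i ≠ j → ∀ q, (p i) q ≠ q → (p j) q = q)
    (hw : w = b * (List.ofFn p).prod) :
    ∃ f : {z : Equiv.Perm (Fin n × Bool) // inB z ∧ absLe (reflB n) z w} ≃
        ({z : Equiv.Perm (Fin n × Bool) // inB z ∧ absLe (reflB n) z b} ×
          ∀ i : Fin k, {z : Equiv.Perm (Fin n × Bool) // inB z ∧ absLe (reflB n) z (p i)}),
      ∀ x y, absLe (reflB n) x.1 y.1 ↔
        (absLe (reflB n) (f x).1.1 (f y).1.1 ∧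
          ∀ i, absLe (reflB n) ((f x).2 i).1 ((f y).2 i).1) := by
  have hfix (i : Fin k) : ∃ v ∈ fixSpace (p i), Function.support v = movedIdx (p i) := by
    obtain ⟨O, hO, hcard, hdisjO, hfixO⟩ := hpc i
    exact exists_mem_fixSpace_support_eq (hp i) hO hcard hdisjO hfixO
  have hdisj : Pairwise fun i j => Disjoint (movedIdx (p i)) (movedIdx (p j)) :=
    fun i j hij => Set.disjoint_left.2 fun m hi hj => hj (hdisj₂ i j hij _ hi)
  have hbp : SuppIn b (⋃ i, movedIdx (p i))ᶜ := fun q hq => by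
    obtain ⟨i, hi⟩ := Set.mem_iUnion.1 (not_not.1 hq)
    by_contra hbq
    exact hi (((hp i).apply_eq_self_iff q).1 (hdisj₁ i q hbq))
  exact exists_absInterval_equiv_pi hb hp hfix hdisj hbp hw

/-- let `w = b · p_1 ⋯ p_k ∈ B_n`, where `b` is the product of the
balanced cycles of `w` (every non-fixed point of `b` lies in a negation-stable
orbit) and `p_1, …, p_k` are the disjoint (nontrivial) paired cycles of `w`, all
factors having pairwise disjoint supports.  Then the interval `[e,w]` of `Abs(B_n)`
is isomorphic, as a poset, to the direct product `[e,b] × [e,p_1] × ⋯ × [e,p_k]`. -/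
theorem stmt_18 (n k : ℕ) (w b : Equiv.Perm (Fin n × Bool))
    (p : Fin k → Equiv.Perm (Fin n × Bool))
    (hb : inB b) (hp : ∀ i, inB (p i))
    (hbbal : ∀ q, b q ≠ q →
      negp '' {x | b.SameCycle q x} = {x | b.SameCycle q x})
    (hpc : ∀ i, ∃ O : Set (Fin n × Bool), isOrbit (p i) O ∧ 2 ≤ Nat.card O ∧
      (negp '' O) ∩ O = ∅ ∧ ∀ q, q ∉ O → q ∉ negp '' O → (p i) q = q)
    (hdisj₁ : ∀ i, ∀ q, b q ≠ q → (p i) q = q)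
    (hdisj₂ : ∀ i j, i ≠ j → ∀ q, (p i) q ≠ q → (p j) q = q)
    (hw : w = b * (List.ofFn p).prod) :
    ∃ f : {z : Equiv.Perm (Fin n × Bool) // inB z ∧ absLe (reflB n) z w} ≃
        ({z : Equiv.Perm (Fin n × Bool) // inB z ∧ absLe (reflB n) z b} ×
          ∀ i : Fin k, {z : Equiv.Perm (Fin n × Bool) // inB z ∧ absLe (reflB n) z (p i)}),
      ∀ x y, absLe (reflB n) x.1 y.1 ↔
        (absLe (reflB n) (f x).1.1 (f y).1.1 ∧
          ∀ i, absLe (reflB n) ((f x).2 i).1 ((f y).2 i).1) :=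
  stmt_18_general n k w b p hb hp hpc hdisj₁ hdisj₂ hw
end

section
/- Let π_n: S_n → S_n send a permutation w to the permutation obtained by deleting n from the cycle of w containing it (so π_n(w) fixes n). Then π_n(w) ⪯ w in the absolute order, and π_n is order-preserving: u ⪯ v implies π_n(u) ⪯ π_n(v). -/
open scoped Classical

/-- The projection `π_n : S_n → S_n` deleting the letter `n` (here the last
element of `Fin (n+1)`) from the cycle of `w` containing it:
`π_n(w) = w ∘ (w⁻¹(n), n)`, so that `π_n(w)(i) = w(i)` if `w(i) ≠ n`,
`π_n(w)(i) = w(n)` if `w(i) = n ≠ i`, and `π_n(w)(n) = n`. -/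
def πdel (n : ℕ) (w : Equiv.Perm (Fin (n + 1))) : Equiv.Perm (Fin (n + 1)) :=
  w * Equiv.swap (w⁻¹ (Fin.last n)) (Fin.last n)

/-!
Let `ℓ(σ)` be `card α` minus the dimension of the space of `σ`-invariant functions `α → ℚ`, i.e.
`card α` minus the number of cycles of `σ`. A function invariant under `x` and `y` is invariant
under `xy`, so the dimension formula makes `ℓ` subadditive. Left multiplication by `(x σx)` turns
`x` into a fixed point, a new invariant function being the indicator of `x`, so it lowers `ℓ` by
one; hence every `σ` is a product of `ℓ(σ)` transpositions and `ℓ = ℓ_T`. Right multiplication by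
`(a b)` with `a`, `b` in one cycle of `σ` keeps every `σ`-invariant function invariant and flips
the sign `(-1)^ℓ`, so it also lowers `ℓ` by one. As `π_n(w) = w (w⁻¹(n) n)`, this gives
`π_n(w) ⪯ w`.

For monotonicity let `p = π_n(u)`; then `p ⪯ u ⪯ v` gives `p ⪯ v`. Since `p` fixes `n`,
`p⁻¹ π_n(v) = π_n(p⁻¹ v)`, and `v`, `p⁻¹ v` send the same letter to `n`, so `π_n` shortens both
by the same amount; subtracting it from `ℓ(p) + ℓ(p⁻¹v) = ℓ(v)` gives `π_n(u) ⪯ π_n(v)`.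
-/

namespace Equiv.Perm

open Module

variable {α : Type*}

def fixedFuns (σ : Perm α) : Submodule ℚ (α → ℚ) where
  carrier := {v | ∀ i, v (σ i) = v i}
  add_mem' hv hw i := by simp only [Pi.add_apply, hv i, hw i]
  zero_mem' _ := rfl
  smul_mem' c v hv i := by simp only [Pi.smul_apply, hv i]

theorem fixedFuns_inf_le_mul (x y : Perm α) : fixedFuns x ⊓ fixedFuns y ≤ fixedFuns (x * y) :=
  fun v ⟨hx, hy⟩ i => by rw [mul_apply, hx, hy]

theorem single_mem_fixedFuns_iff [DecidableEq α] {σ : Perm α} {x : α} :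
    (Pi.single x 1 : α → ℚ) ∈ fixedFuns σ ↔ σ x = x := by
  refine ⟨fun h => by_contra fun hx => ?_, fun hx i => ?_⟩
  · have := h x
    rw [Pi.single_eq_same, Pi.single_eq_of_ne hx] at this
    exact zero_ne_one this
  · simp only [Pi.single_apply, σ.injective.eq_iff' hx]

theorem apply_swap_of_eq [DecidableEq α] {v : α → ℚ} {a b : α} (h : v a = v b) (i : α) :
    v (swap a b i) = v i := by
  rw [swap_apply_def]
  split_ifs with ha hb
  · rw [ha, h]
  · rw [hb, h]
  · rfl

section Fintype

variable [Fintype α]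

noncomputable def absLength (σ : Perm α) : ℕ := Fintype.card α - finrank ℚ (fixedFuns σ)

theorem finrank_le_card (p : Submodule ℚ (α → ℚ)) : finrank ℚ p ≤ Fintype.card α :=
  (Submodule.finrank_le p).trans_eq (finrank_fintype_fun_eq_card ℚ)

theorem absLength_add_finrank (σ : Perm α) :
    absLength σ + finrank ℚ (fixedFuns σ) = Fintype.card α := by
  have := finrank_le_card (fixedFuns σ)
  unfold absLength
  omega

theorem absLength_one : absLength (1 : Perm α) = 0 := by
  have htop : fixedFuns (1 : Perm α) = ⊤ := eq_top_iff.2 fun _ _ _ => rfl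
  rw [absLength, htop, finrank_top, finrank_fintype_fun_eq_card, Nat.sub_self]

theorem finrank_add_finrank_le_inf (p q : Submodule ℚ (α → ℚ)) :
    finrank ℚ p + finrank ℚ q ≤ finrank ℚ ↥(p ⊓ q) + Fintype.card α := by
  have := Submodule.finrank_sup_add_finrank_inf_eq p q
  have := finrank_le_card (p ⊔ q)
  omega

theorem absLength_mul_le (x y : Perm α) : absLength (x * y) ≤ absLength x + absLength y := by
  have := finrank_add_finrank_le_inf (fixedFuns x) (fixedFuns y)
  have := Submodule.finrank_mono (fixedFuns_inf_le_mul x y)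
  have := absLength_add_finrank x
  have := absLength_add_finrank y
  have := absLength_add_finrank (x * y)
  omega

theorem SameCycle.apply_eq_of_mem_fixedFuns {σ : Perm α} {a b : α} (h : σ.SameCycle a b)
    {v : α → ℚ} (hv : v ∈ fixedFuns σ) : v a = v b := by
  obtain ⟨k, -, rfl⟩ := h.exists_pow_eq'
  clear h
  induction k with
  | zero => rfl
  | succ k ih => rw [ih, pow_succ', mul_apply, hv]

theorem absLength_swap_le_one [DecidableEq α] (a b : α) : absLength (swap a b) ≤ 1 := by
  let φ : (α → ℚ) →ₗ[ℚ] ℚ :=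
    LinearMap.proj (R := ℚ) (φ := fun _ ↦ ℚ) a - LinearMap.proj b
  have hker : fixedFuns (swap a b) = LinearMap.ker φ := by
    ext v
    refine ⟨fun hv => ?_, fun hv => apply_swap_of_eq (sub_eq_zero.1 hv)⟩
    have := hv b
    rw [swap_apply_right] at this
    simp [φ, this]
  have hrank := LinearMap.finrank_range_add_finrank_ker φ
  have hrange := Submodule.finrank_le (LinearMap.range φ)
  rw [finrank_fintype_fun_eq_card] at hrank
  rw [finrank_self] at hrange
  have := absLength_add_finrank (swap a b)
  rw [hker] at this
  omega

variable [DecidableEq α]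

theorem absLength_swap_mul_add_one {σ : Perm α} {x : α} (hx : σ x ≠ x) :
    absLength (swap x (σ x) * σ) + 1 = absLength σ := by
  have hlt : fixedFuns σ < fixedFuns (swap x (σ x) * σ) := by
    refine lt_of_le_of_ne (fun v hv i => ?_) fun h => hx ?_
    · rw [mul_apply, apply_swap_of_eq (hv x).symm, hv]
    · rw [← single_mem_fixedFuns_iff, h, single_mem_fixedFuns_iff, mul_apply, swap_apply_right]
  have hle := absLength_mul_le (swap x (σ x)) (swap x (σ x) * σ)
  rw [← mul_assoc, swap_mul_self, one_mul] at hle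
  have := absLength_swap_le_one x (σ x)
  have := Submodule.finrank_lt_finrank_of_lt hlt
  have := absLength_add_finrank σ
  have := absLength_add_finrank (swap x (σ x) * σ)
  omega

theorem absLength_swap {a b : α} (hab : a ≠ b) : absLength (swap a b) = 1 := by
  have := absLength_swap_mul_add_one (σ := swap a b) (x := a) (by rwa [swap_apply_left, ne_comm])
  rwa [swap_apply_left, swap_mul_self, absLength_one, zero_add, eq_comm] at this

theorem exists_list_isSwap_prod_eq (σ : Perm α) :
    ∃ l : List (Perm α), (∀ t ∈ l, t.IsSwap) ∧ l.prod = σ ∧ l.length = absLength σ := by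
  rcases eq_or_ne σ 1 with rfl | hσ
  · exact ⟨[], by simp, rfl, absLength_one.symm⟩
  obtain ⟨x, hx⟩ : ∃ x, σ x ≠ x := not_forall.1 fun h => hσ (ext h)
  have hdrop := absLength_swap_mul_add_one hx
  obtain ⟨l, hl, hprod, hlen⟩ := exists_list_isSwap_prod_eq (swap x (σ x) * σ)
  refine ⟨swap x (σ x) :: l, ?_, ?_, by rw [List.length_cons, hlen, hdrop]⟩
  · rintro t (_ | ⟨_, ht⟩)
    exacts [⟨x, σ x, hx.symm, rfl⟩, hl t ht]
  · rw [List.prod_cons, hprod, ← mul_assoc, swap_mul_self, one_mul]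
termination_by absLength σ
decreasing_by omega

theorem absLength_list_prod_le {l : List (Perm α)} (hl : ∀ t ∈ l, t.IsSwap) :
    absLength l.prod ≤ l.length := by
  induction l with
  | nil => simp [absLength_one]
  | cons t l ih =>
    obtain ⟨a, b, hab, rfl⟩ := hl t List.mem_cons_self
    have := absLength_mul_le (swap a b) l.prod
    rw [absLength_swap hab] at this
    have := ih fun s hs => hl s (List.mem_cons_of_mem _ hs)
    simp only [List.prod_cons, List.length_cons]
    omega

theorem sign_eq_neg_one_pow_absLength (σ : Perm α) : sign σ = (-1) ^ absLength σ := by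
  obtain ⟨l, hl, rfl, hlen⟩ := exists_list_isSwap_prod_eq σ
  rw [← hlen, sign_prod_list_swap hl]

theorem absLength_mul_swap_ne (σ : Perm α) {a b : α} (hab : a ≠ b) :
    absLength (σ * swap a b) ≠ absLength σ := by
  intro h
  have := sign_eq_neg_one_pow_absLength (σ * swap a b)
  rw [h, sign_mul, sign_swap hab, sign_eq_neg_one_pow_absLength, mul_neg_one] at this
  rcases Int.units_eq_one_or ((-1 : ℤˣ) ^ absLength σ) with h₁ | h₁ <;>
    rw [h₁] at this <;> exact absurd this (by decide)

theorem absLength_mul_swap_add_one {σ : Perm α} {a b : α} (hab : a ≠ b) (h : σ.SameCycle a b) :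
    absLength (σ * swap a b) + 1 = absLength σ := by
  have hle : fixedFuns σ ≤ fixedFuns (σ * swap a b) := fun v hv i => by
    rw [mul_apply, hv, apply_swap_of_eq (h.apply_eq_of_mem_fixedFuns hv)]
  have := Submodule.finrank_mono hle
  have := absLength_add_finrank σ
  have := absLength_add_finrank (σ * swap a b)
  have := absLength_mul_le (σ * swap a b) (swap a b)
  rw [mul_assoc, swap_mul_self, mul_one, absLength_swap hab] at this
  have := absLength_mul_swap_ne σ hab
  omega

theorem absLength_mul_swap_add_absLength_swap {σ : Perm α} {a b : α} (h : σ.SameCycle a b) :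
    absLength (σ * swap a b) + absLength (swap a b) = absLength σ := by
  rcases eq_or_ne a b with rfl | hab
  · rw [swap_self, ← one_def, mul_one, absLength_one, add_zero]
  · rw [absLength_swap hab, absLength_mul_swap_add_one hab h]

theorem wordLen_isSwap (σ : Perm α) : wordLen {τ : Perm α | τ.IsSwap} σ = absLength σ := by
  obtain ⟨l, hl, hprod, hlen⟩ := exists_list_isSwap_prod_eq σ
  have hmem : absLength σ ∈ {k | ∃ l : List (Perm α), l.length = k ∧
      (∀ t ∈ l, t ∈ {τ : Perm α | τ.IsSwap}) ∧ l.prod = σ} := ⟨l, hlen, hl, hprod⟩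
  refine le_antisymm (Nat.sInf_le hmem) ?_
  obtain ⟨l', hlen', hl', rfl⟩ := Nat.sInf_mem ⟨_, hmem⟩
  rw [wordLen, ← hlen']
  exact absLength_list_prod_le hl'

theorem absLe_isSwap_iff {u v : Perm α} :
    absLe {τ : Perm α | τ.IsSwap} u v ↔ absLength u + absLength (u⁻¹ * v) = absLength v := by
  simp only [absLe, wordLen_isSwap]

theorem absLe_isSwap_iff_le {u v : Perm α} :
    absLe {τ : Perm α | τ.IsSwap} u v ↔ absLength u + absLength (u⁻¹ * v) ≤ absLength v := by
  have := absLength_mul_le u (u⁻¹ * v)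
  rw [mul_inv_cancel_left] at this
  rw [absLe_isSwap_iff]
  omega

theorem absLe_isSwap_trans {u v w : Perm α} (huv : absLe {τ : Perm α | τ.IsSwap} u v)
    (hvw : absLe {τ : Perm α | τ.IsSwap} v w) : absLe {τ : Perm α | τ.IsSwap} u w := by
  rw [absLe_isSwap_iff] at huv hvw
  rw [absLe_isSwap_iff_le]
  have := absLength_mul_le (u⁻¹ * v) (v⁻¹ * w)
  rw [← mul_assoc, mul_inv_cancel_right] at this
  omega

end Fintype

end Equiv.Perm

open Equiv Equiv.Perm

section Deletion

variable {n : ℕ}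

theorem πdel_apply_last (w : Perm (Fin (n + 1))) : πdel n w (Fin.last n) = Fin.last n := by
  rw [πdel, mul_apply, swap_apply_right]
  exact w.apply_symm_apply _

theorem πdel_mul_of_apply_last {u : Perm (Fin (n + 1))} (hu : u (Fin.last n) = Fin.last n)
    (w : Perm (Fin (n + 1))) : πdel n (u * w) = u * πdel n w := by
  rw [πdel, πdel, mul_inv_rev, mul_apply, inv_eq_iff_eq.2 hu.symm, mul_assoc]

theorem absLength_πdel_add (w : Perm (Fin (n + 1))) :
    absLength (πdel n w) + absLength (swap (w⁻¹ (Fin.last n)) (Fin.last n)) = absLength w :=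
  absLength_mul_swap_add_absLength_swap (sameCycle_symm_apply_left.2 (SameCycle.refl _ _))

theorem absLe_πdel (w : Perm (Fin (n + 1))) : absLe {σ | σ.IsSwap} (πdel n w) w := by
  rw [absLe_isSwap_iff, πdel, mul_inv_rev, swap_inv, inv_mul_cancel_right]
  exact absLength_πdel_add w

theorem absLe_πdel_of_absLe {u v : Perm (Fin (n + 1))} (h : absLe {σ | σ.IsSwap} u v) :
    absLe {σ | σ.IsSwap} (πdel n u) (πdel n v) := by
  set p := πdel n u
  have hp : p⁻¹ (Fin.last n) = Fin.last n := inv_eq_iff_eq.2 (πdel_apply_last u).symm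
  have hpv : absLength p + absLength (p⁻¹ * v) = absLength v :=
    absLe_isSwap_iff.1 (absLe_isSwap_trans (absLe_πdel u) h)
  have hπy := absLength_πdel_add (p⁻¹ * v)
  have hπv := absLength_πdel_add v
  rw [mul_inv_rev, inv_inv, mul_apply, πdel_apply_last] at hπy
  rw [absLe_isSwap_iff_le, ← πdel_mul_of_apply_last hp]
  omega

end Deletion

/-- `π_n(w) ⪯ w` in the absolute order on `S_n`, and `π_n` is
order preserving: `u ⪯ v` implies `π_n(u) ⪯ π_n(v)`. -/
theorem stmt_19 (n : ℕ) :
    (∀ w : Equiv.Perm (Fin (n + 1)),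
      absLe {σ : Equiv.Perm (Fin (n + 1)) | σ.IsSwap} (πdel n w) w) ∧
    (∀ u v : Equiv.Perm (Fin (n + 1)),
      absLe {σ : Equiv.Perm (Fin (n + 1)) | σ.IsSwap} u v →
      absLe {σ : Equiv.Perm (Fin (n + 1)) | σ.IsSwap} (πdel n u) (πdel n v)) :=
  ⟨absLe_πdel, fun _ _ => absLe_πdel_of_absLe⟩
end
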